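/- arXiv:2305.10265 — 5 statements merged into one kernel-verified Lean document; each statement's English description precedes it below -/
import Mathlib

section
/- Fix μ > 0 and ε ∈ (0, μ/2). There exists a constant C > 0 depending only on ε and μ such that for all a > 0, N ∈ ℤ_{>0}, ρ ∈ [ε, μ-ε], and all real b with |b| ≤ (ε/4)N^{1/3}, the Radon–Nikodym derivative f = dP^{ρ + bN^{-1/3}}/dP^{ρ} of the product of ⌊aN^{2/3}⌋ i.i.d. inverse-gamma coordinates satisfies E^{P^ρ}[f²] ≤ exp(C a b²). -/
open MeasureTheory Real
open scoped ENNReal NNReal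

/-- Density of the inverse-gamma distribution with shape parameter `α`. -/
noncomputable def invGammaPdf (α x : ℝ) : ℝ :=
  if 0 < x then (Real.Gamma α)⁻¹ * x ^ (-(α + 1)) * Real.exp (-x⁻¹) else 0

/-- The inverse-gamma distribution with shape parameter `α`. -/
noncomputable def invGammaMeasure (α : ℝ) : Measure ℝ :=
  volume.withDensity fun x => ENNReal.ofReal (invGammaPdf α x)

instance (α : ℝ) : SigmaFinite (invGammaMeasure α) := by
  unfold invGammaMeasure; infer_instance

lemma measurable_invGammaPdf (α : ℝ) : Measurable (invGammaPdf α) := by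
  have : invGammaPdf α = fun x =>
      if 0 < x then (Real.Gamma α)⁻¹ * Real.exp (Real.log x * (-(α + 1))) * Real.exp (-x⁻¹)
      else 0 := by
    funext x
    unfold invGammaPdf
    by_cases hx : 0 < x
    · rw [if_pos hx, if_pos hx, Real.rpow_def_of_pos hx]
    · rw [if_neg hx, if_neg hx]
  rw [this]
  apply Measurable.ite measurableSet_Ioi
  · exact (((Real.measurable_log.mul measurable_const).exp.const_mul _).mul
      (measurable_id.inv.neg.exp))
  · exact measurable_const

lemma invGammaPdf_nonneg {α : ℝ} (hα : 0 < α) (x : ℝ) : 0 ≤ invGammaPdf α x := by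
  unfold invGammaPdf
  split
  · have := Real.Gamma_pos_of_pos hα
    positivity
  · exact le_refl 0

lemma pi_integral_pow {β : Type*} [MeasurableSpace β] (m : Measure β) [SigmaFinite m]
    (f : β → ℝ) (n : ℕ) :
    ∫ ω : Fin n → β, ∏ i, f (ω i) ∂(Measure.pi fun _ => m) = (∫ x, f x ∂m) ^ n := by
  letI : MeasureSpace β := ⟨m⟩
  simpa using MeasureTheory.integral_fintype_prod_eq_pow (ι := Fin n) f

lemma integral_invGammaMeasure {α : ℝ} (hα : 0 < α) (g : ℝ → ℝ) :
    ∫ x, g x ∂(invGammaMeasure α) = ∫ x, invGammaPdf α x * g x := by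
  have h : invGammaMeasure α
      = volume.withDensity fun x => (((invGammaPdf α x).toNNReal : ℝ≥0) : ℝ≥0∞) := rfl
  rw [h, integral_withDensity_eq_integral_smul (measurable_invGammaPdf α).real_toNNReal]
  congr 1; ext x
  simp [NNReal.smul_def, Real.coe_toNNReal _ (invGammaPdf_nonneg hα x)]

open Set in
lemma invGamma_sub_integral {s : ℝ} (hs : 0 < s) :
    ∫ x in Set.Ioi (0:ℝ), Real.exp (-x⁻¹) * x ^ (-s-1) = Real.Gamma s := by
  have h := integral_comp_rpow_Ioi (fun y => Real.exp (-y) * y ^ (s-1)) (p := -1) (by norm_num)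
  rw [Real.Gamma_eq_integral hs, ← h]
  refine setIntegral_congr_fun measurableSet_Ioi (fun x hx => ?_)
  have hx0 : (0:ℝ) < x := hx
  simp only [smul_eq_mul, Real.rpow_neg_one, abs_neg, abs_one, one_mul]
  rw [Real.inv_rpow hx0.le, ← Real.rpow_neg hx0.le]
  rw [show (-1:ℝ) - 1 = -2 by norm_num, mul_comm (x ^ (-2:ℝ)), mul_assoc,
    ← Real.rpow_add hx0]
  ring_nf

open Set in
lemma oneDim {ρ δ : ℝ} (hρ : 0 < ρ) (hρ' : 0 < ρ + δ) (hs : 0 < ρ + 2*δ) :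
    ∫ x, (invGammaPdf (ρ+δ) x / invGammaPdf ρ x)^2 ∂(invGammaMeasure ρ)
      = Real.Gamma (ρ+2*δ) * Real.Gamma ρ / Real.Gamma (ρ+δ)^2 := by
  rw [integral_invGammaMeasure hρ]
  have hfun : (fun x => invGammaPdf ρ x * (invGammaPdf (ρ+δ) x / invGammaPdf ρ x)^2)
      = (Ioi (0:ℝ)).indicator
        (fun x => (Real.Gamma ρ / Real.Gamma (ρ+δ)^2) * (Real.exp (-x⁻¹) * x ^ (-(ρ+2*δ)-1))) := by
    funext x
    by_cases hx : 0 < x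
    · rw [Set.indicator_of_mem (Set.mem_Ioi.mpr hx)]
      unfold invGammaPdf
      rw [if_pos hx, if_pos hx]
      have hE : Real.exp (-x⁻¹) ≠ 0 := Real.exp_ne_zero _
      have hΓρ : (0:ℝ) < Real.Gamma ρ := Real.Gamma_pos_of_pos hρ
      have hΓρ' : (0:ℝ) < Real.Gamma (ρ+δ) := Real.Gamma_pos_of_pos hρ'
      have hA : (0:ℝ) < x ^ (-(ρ+δ+1)) := Real.rpow_pos_of_pos hx _
      have hB : (0:ℝ) < x ^ (-(ρ+1)) := Real.rpow_pos_of_pos hx _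
      have key : (x ^ (-(ρ+δ+1)))^2 = x ^ (-(ρ+1)) * x ^ (-(ρ+2*δ)-1) := by
        rw [← Real.rpow_natCast (x ^ (-(ρ+δ+1))) 2, ← Real.rpow_mul hx.le,
          ← Real.rpow_add hx]
        congr 1
        push_cast
        ring
      set A := x ^ (-(ρ+δ+1)) with hA'
      set B := x ^ (-(ρ+1)) with hB'
      set T := x ^ (-(ρ+2*δ)-1) with hT'
      set E := Real.exp (-x⁻¹) with hE'
      field_simp
      linear_combination key
    · rw [Set.indicator_of_notMem (by simpa using hx)]
      unfold invGammaPdf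
      rw [if_neg hx, zero_mul]
  rw [hfun, integral_indicator measurableSet_Ioi, integral_const_mul,
    invGamma_sub_integral hs]
  ring


lemma contDiffAt_Gamma_real {x : ℝ} (hx : 0 < x) : ContDiffAt ℝ 2 Real.Gamma x := by
  have hU : IsOpen {z : ℂ | 0 < z.re} := isOpen_lt continuous_const Complex.continuous_re
  have hd : DifferentiableOn ℂ Complex.Gamma {z : ℂ | 0 < z.re} := by
    intro z hz
    refine (Complex.differentiableAt_Gamma z fun m => ?_).differentiableWithinAt
    intro h
    have : z.re = -(m:ℝ) := by rw [h]; simp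
    have hz' : (0:ℝ) < z.re := hz
    rw [this] at hz'
    have : (0:ℝ) ≤ (m:ℝ) := Nat.cast_nonneg m
    linarith
  have han := hd.analyticOnNhd hU
  have hc : ContDiffAt ℂ 2 Complex.Gamma (x : ℂ) :=
    (han _ (by simpa using hx)).contDiffAt
  have hcR : ContDiffAt ℝ 2 Complex.Gamma (x : ℂ) := hc.restrict_scalars ℝ
  have hrw : Real.Gamma = fun y : ℝ => (Complex.Gamma (y : ℂ)).re := by
    funext y
    rw [Complex.Gamma_ofReal]
    simp
  rw [hrw]
  exact Complex.reCLM.contDiff.contDiffAt.comp _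
    (hcR.comp x Complex.ofRealCLM.contDiff.contDiffAt)

lemma gamma_ratio_bound (μ ε : ℝ) (hε : 0 < ε) (hεμ : ε < μ / 2) :
    ∃ L : ℝ, 0 < L ∧ ∀ ρ ∈ Set.Icc ε (μ - ε), ∀ δ : ℝ, |δ| ≤ ε / 4 →
      Real.Gamma (ρ + 2*δ) * Real.Gamma ρ / Real.Gamma (ρ + δ) ^ 2
        ≤ Real.exp (4 * L * δ ^ 2) := by
  set F : ℝ → ℝ := fun x => Real.log (Real.Gamma x) with hF
  have hF2 : ContDiffOn ℝ 2 F (Set.Ioi 0) := fun x hx =>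
    ((contDiffAt_Gamma_real hx).log (Real.Gamma_pos_of_pos hx).ne').contDiffWithinAt
  have hF1 : ContDiffOn ℝ 1 (deriv F) (Set.Ioi 0) :=
    hF2.deriv_of_isOpen isOpen_Ioi (by norm_num)
  have hFd : ∀ x ∈ Set.Ioi (0:ℝ), DifferentiableAt ℝ F x := fun x hx =>
    ((hF2 x hx).contDiffAt (isOpen_Ioi.mem_nhds hx)).differentiableAt (by norm_num)
  have hF'd : ∀ x ∈ Set.Ioi (0:ℝ), DifferentiableAt ℝ (deriv F) x := fun x hx =>
    ((hF1 x hx).contDiffAt (isOpen_Ioi.mem_nhds hx)).differentiableAt (by norm_num)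
  have hF'' : ContinuousOn (deriv (deriv F)) (Set.Ioi 0) :=
    (hF1.deriv_of_isOpen (m := 0) isOpen_Ioi (by norm_num)).continuousOn
  set K : Set ℝ := Set.Icc (ε/2) μ with hKdef
  have hK : K ⊆ Set.Ioi 0 := fun t ht => lt_of_lt_of_le (by linarith [ht.1]) (le_refl t)
  obtain ⟨M, hM⟩ := (isCompact_Icc).exists_bound_of_continuousOn (hF''.mono hK)
  set L : ℝ := max M 0 + 1 with hLdef
  have hL0 : 0 < L := by positivity
  have lip : ∀ x ∈ K, ∀ y ∈ K, |deriv F y - deriv F x| ≤ L * |y - x| := by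
    intro x hx y hy
    have := Convex.norm_image_sub_le_of_norm_deriv_le (C := L) (f := deriv F)
      (fun t ht => hF'd t (hK ht))
      (fun t ht => le_trans (hM t ht) (by nlinarith [le_max_left M (0:ℝ)]))
      (convex_Icc _ _) hx hy
    simpa [Real.norm_eq_abs] using this
  refine ⟨L, hL0, ?_⟩
  intro ρ hρ δ hδ
  have hδ1 : -(ε/4) ≤ δ := neg_le_of_abs_le hδ
  have hδ2 : δ ≤ ε/4 := le_of_abs_le hδ
  have hρ1 : ε ≤ ρ := hρ.1
  have hρ2 : ρ ≤ μ - ε := hρ.2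
  set d : ℝ := |δ| with hd
  have hd0 : 0 ≤ d := abs_nonneg δ
  have hdε : d ≤ ε/4 := hδ
  have hδd1 : -d ≤ δ := neg_abs_le δ
  have hδd2 : δ ≤ d := le_abs_self δ
  set J : Set ℝ := Set.Icc (ρ - 2*d) (ρ + 2*d) with hJdef
  have hJK : J ⊆ K := by
    intro t ht
    constructor
    · linarith [ht.1]
    · linarith [ht.2]
  have hρK : ρ ∈ K := ⟨by linarith, by linarith⟩
  set G : ℝ → ℝ := fun t => F t - deriv F ρ * t with hG
  have hGd : ∀ t ∈ J, DifferentiableAt ℝ G t := fun t ht =>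
    (hFd t (hK (hJK ht))).sub (differentiableAt_fun_id.const_mul _)
  have hderivG : ∀ t ∈ J, deriv G t = deriv F t - deriv F ρ := by
    intro t ht
    rw [hG]
    rw [deriv_fun_sub (hFd t (hK (hJK ht))) (differentiableAt_fun_id.const_mul _),
      deriv_const_mul _ differentiableAt_fun_id, deriv_id'', mul_one]
  have hbound : ∀ t ∈ J, ‖deriv G t‖ ≤ L * (2*d) := by
    intro t ht
    rw [hderivG t ht, Real.norm_eq_abs]
    calc |deriv F t - deriv F ρ| ≤ L * |t - ρ| := lip ρ hρK t (hJK ht)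
    _ ≤ L * (2*d) := by
        apply mul_le_mul_of_nonneg_left _ hL0.le
        rw [abs_le]
        constructor <;> [linarith [ht.1]; linarith [ht.2]]
  have hGlip : ∀ u ∈ J, ∀ v ∈ J, |G v - G u| ≤ L * (2*d) * |v - u| := by
    intro u hu v hv
    have := Convex.norm_image_sub_le_of_norm_deriv_le (f := G) hGd hbound
      (convex_Icc _ _) hu hv
    simpa [Real.norm_eq_abs] using this
  have hmem1 : ρ ∈ J := ⟨by linarith, by linarith⟩
  have hmem2 : ρ + δ ∈ J := ⟨by linarith, by linarith⟩
  have hmem3 : ρ + 2*δ ∈ J := ⟨by linarith, by linarith⟩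
  have e1 : |G (ρ + 2*δ) - G (ρ + δ)| ≤ L * (2*d) * d := by
    have := hGlip (ρ + δ) hmem2 (ρ + 2*δ) hmem3
    have h' : |ρ + 2*δ - (ρ + δ)| = d := by rw [hd]; congr 1; ring
    rwa [h'] at this
  have e2 : |G (ρ + δ) - G ρ| ≤ L * (2*d) * d := by
    have := hGlip ρ hmem1 (ρ + δ) hmem2
    have h' : |ρ + δ - ρ| = d := by rw [hd]; congr 1; ring
    rwa [h'] at this
  have key : F (ρ + 2*δ) + F ρ - 2 * F (ρ + δ) ≤ 4 * L * δ ^ 2 := by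
    have h1 : F (ρ + 2*δ) + F ρ - 2 * F (ρ + δ)
        = (G (ρ + 2*δ) - G (ρ + δ)) - (G (ρ + δ) - G ρ) := by
      simp only [hG]; ring
    have hdd : d * d = δ ^ 2 := by rw [hd, ← abs_mul, ← sq, abs_of_nonneg (sq_nonneg δ)]
    calc F (ρ + 2*δ) + F ρ - 2 * F (ρ + δ)
        = (G (ρ + 2*δ) - G (ρ + δ)) - (G (ρ + δ) - G ρ) := h1
      _ ≤ |G (ρ + 2*δ) - G (ρ + δ)| + |G (ρ + δ) - G ρ| := by
          have := abs_sub_abs_le_abs_sub (G (ρ + 2*δ) - G (ρ + δ)) (G (ρ + δ) - G ρ)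
          have h2 := le_abs_self (G (ρ + 2*δ) - G (ρ + δ))
          have h3 := neg_abs_le (G (ρ + δ) - G ρ)
          linarith
      _ ≤ L * (2*d) * d + L * (2*d) * d := add_le_add e1 e2
      _ = 4 * L * (d * d) := by ring
      _ = 4 * L * δ ^ 2 := by rw [hdd]
  have hρpos : (0:ℝ) < ρ := lt_of_lt_of_le hε hρ1
  have hρ'pos : (0:ℝ) < ρ + δ := by linarith
  have hspos : (0:ℝ) < ρ + 2*δ := by linarith
  have hΓs := Real.Gamma_pos_of_pos hspos
  have hΓρ := Real.Gamma_pos_of_pos hρpos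
  have hΓρ' := Real.Gamma_pos_of_pos hρ'pos
  have heq : Real.Gamma (ρ + 2*δ) * Real.Gamma ρ / Real.Gamma (ρ + δ) ^ 2
      = Real.exp (F (ρ + 2*δ) + F ρ - 2 * F (ρ + δ)) := by
    rw [Real.exp_sub, Real.exp_add, hF]
    simp only []
    rw [Real.exp_log hΓs, Real.exp_log hΓρ]
    congr 1
    rw [show (2:ℝ) * Real.log (Real.Gamma (ρ + δ))
        = Real.log (Real.Gamma (ρ + δ)) + Real.log (Real.Gamma (ρ + δ)) by ring,
      Real.exp_add, Real.exp_log hΓρ', sq]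
  rw [heq]
  exact Real.exp_le_exp.mpr key

theorem stmt1 (μ ε : ℝ) (hμ : 0 < μ) (hε : ε ∈ Set.Ioo 0 (μ / 2)) :
    ∃ C > 0, ∀ a : ℝ, 0 < a → ∀ N : ℕ, 0 < N → ∀ ρ ∈ Set.Icc ε (μ - ε), ∀ b : ℝ,
      |b| ≤ ε / 4 * (N : ℝ) ^ ((1 : ℝ) / 3) →
      (∫ ω : Fin ⌊a * (N : ℝ) ^ ((2 : ℝ) / 3)⌋₊ → ℝ,
          (∏ i, invGammaPdf (ρ + b * (N : ℝ) ^ (-(1 : ℝ) / 3)) (ω i)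
              / invGammaPdf ρ (ω i)) ^ 2
          ∂(Measure.pi fun _ => invGammaMeasure ρ))
        ≤ Real.exp (C * a * b ^ 2) := by
  obtain ⟨L, hL0, hLbd⟩ := gamma_ratio_bound μ ε hε.1 hε.2
  refine ⟨4 * L, by positivity, ?_⟩
  intro a ha N hN ρ hρ b hb
  have hNpos : (0:ℝ) < (N:ℝ) := by exact_mod_cast hN
  set δ : ℝ := b * (N : ℝ) ^ (-(1 : ℝ) / 3) with hδdef
  set n : ℕ := ⌊a * (N : ℝ) ^ ((2 : ℝ) / 3)⌋₊ with hndef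
  have hδabs : |δ| ≤ ε / 4 := by
    rw [hδdef, abs_mul, abs_of_nonneg (Real.rpow_nonneg hNpos.le _)]
    calc |b| * (N:ℝ) ^ (-(1:ℝ)/3)
        ≤ (ε / 4 * (N : ℝ) ^ ((1 : ℝ) / 3)) * (N:ℝ) ^ (-(1:ℝ)/3) := by
          apply mul_le_mul_of_nonneg_right hb (Real.rpow_nonneg hNpos.le _)
      _ = ε / 4 := by
          rw [mul_assoc, ← Real.rpow_add hNpos]
          norm_num
  have hρpos : (0:ℝ) < ρ := lt_of_lt_of_le hε.1 hρ.1
  have hδ1 : -(ε/4) ≤ δ := neg_le_of_abs_le hδabs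
  have hδ2 : δ ≤ ε/4 := le_of_abs_le hδabs
  have hρ' : (0:ℝ) < ρ + δ := by linarith [hρ.1]
  have hs : (0:ℝ) < ρ + 2*δ := by linarith [hρ.1]
  have hint : (∫ ω : Fin n → ℝ,
      (∏ i, invGammaPdf (ρ + δ) (ω i) / invGammaPdf ρ (ω i)) ^ 2
      ∂(Measure.pi fun _ => invGammaMeasure ρ))
      = (Real.Gamma (ρ+2*δ) * Real.Gamma ρ / Real.Gamma (ρ+δ)^2) ^ n := by
    rw [← oneDim hρpos hρ' hs, ← pi_integral_pow (invGammaMeasure ρ)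
      (fun x => (invGammaPdf (ρ + δ) x / invGammaPdf ρ x)^2) n]
    congr 1
    funext ω
    rw [← Finset.prod_pow]
  rw [hint]
  have hVnonneg : 0 ≤ Real.Gamma (ρ+2*δ) * Real.Gamma ρ / Real.Gamma (ρ+δ)^2 := by
    have := Real.Gamma_pos_of_pos hs
    have := Real.Gamma_pos_of_pos hρpos
    positivity
  calc (Real.Gamma (ρ+2*δ) * Real.Gamma ρ / Real.Gamma (ρ+δ)^2) ^ n
      ≤ (Real.exp (4 * L * δ ^ 2)) ^ n :=
        pow_le_pow_left₀ hVnonneg (hLbd ρ hρ δ hδabs) n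
    _ = Real.exp ((n:ℝ) * (4 * L * δ ^ 2)) := by rw [← Real.exp_nat_mul]
    _ ≤ Real.exp (4 * L * a * b ^ 2) := by
        apply Real.exp_le_exp.mpr
        have hn : (n:ℝ) ≤ a * (N : ℝ) ^ ((2 : ℝ) / 3) := Nat.floor_le (by positivity)
        have hδ2eq : δ ^ 2 = b ^ 2 * (N:ℝ) ^ (-(2:ℝ)/3) := by
          rw [hδdef, mul_pow, ← Real.rpow_natCast ((N:ℝ) ^ (-(1:ℝ)/3)) 2,
            ← Real.rpow_mul hNpos.le]
          norm_num
        have hNN : (N:ℝ) ^ ((2:ℝ)/3) * (N:ℝ) ^ (-(2:ℝ)/3) = 1 := by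
          rw [← Real.rpow_add hNpos]; norm_num
        rw [hδ2eq]
        have h1 : (n:ℝ) * (4 * L * (b ^ 2 * (N:ℝ) ^ (-(2:ℝ)/3)))
            ≤ (a * (N : ℝ) ^ ((2 : ℝ) / 3)) * (4 * L * (b ^ 2 * (N:ℝ) ^ (-(2:ℝ)/3))) := by
          apply mul_le_mul_of_nonneg_right hn
          have := Real.rpow_nonneg hNpos.le (-(2:ℝ)/3)
          positivity
        have h2 : (a * (N : ℝ) ^ ((2 : ℝ) / 3)) * (4 * L * (b ^ 2 * (N:ℝ) ^ (-(2:ℝ)/3)))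
            = 4 * L * a * b ^ 2 * ((N:ℝ) ^ ((2:ℝ)/3) * (N:ℝ) ^ (-(2:ℝ)/3)) := by ring
        rw [h2, hNN, mul_one] at h1
        linarith
end

section
/- Fix μ > 0 and ε ∈ (0, μ/2). There exist constants K_0, λ_0 > 0 depending only on ε (and μ) such that for every α ∈ [ε, μ-ε], if X is gamma distributed with shape α (and rate 1), then E[exp(λ(log X - Ψ_0(α)))] ≤ exp(K_0 λ²) for all λ ∈ [-λ_0, λ_0], where Ψ_0 = (log Γ)' is the digamma function. -/
open MeasureTheory Real

/-- Density of the gamma distribution with shape `α` and rate 1. -/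
noncomputable def gammaPdf (α x : ℝ) : ℝ :=
  if 0 < x then (Real.Gamma α)⁻¹ * x ^ (α - 1) * Real.exp (-x) else 0

/-- The gamma distribution with shape `α` and rate 1. -/
noncomputable def gammaMeasure' (α : ℝ) : Measure ℝ :=
  volume.withDensity fun x => ENNReal.ofReal (gammaPdf α x)

/-- The digamma function `Ψ₀ = (log Γ)'`. -/
noncomputable def Psi0 : ℝ → ℝ := deriv fun x => Real.log (Real.Gamma x)

lemma gammaAnalytic {x : ℝ} (hx : 0 < x) : AnalyticAt ℝ Real.Gamma x := by
  have hU : IsOpen {z : ℂ | 0 < z.re} := isOpen_lt continuous_const Complex.continuous_re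
  have hd : DifferentiableOn ℂ Complex.Gamma {z : ℂ | 0 < z.re} := by
    intro z hz
    refine (Complex.differentiableAt_Gamma z fun m => ?_).differentiableWithinAt
    intro h
    rw [h] at hz
    simp only [Set.mem_setOf_eq, Complex.neg_re, Complex.natCast_re] at hz
    have : (0:ℝ) ≤ (m:ℝ) := Nat.cast_nonneg m
    linarith
  have hA : AnalyticAt ℂ Complex.Gamma (x : ℂ) :=
    hd.analyticAt (hU.mem_nhds (by simpa using hx))
  have h3 : AnalyticAt ℝ (fun y : ℝ => Complex.Gamma (y : ℂ)) x :=
    (hA.restrictScalars).comp (Complex.ofRealCLM.analyticAt x)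
  have h2 : AnalyticAt ℝ (fun y : ℝ => (Complex.Gamma (y : ℂ)).re) x :=
    (Complex.reCLM.analyticAt _).comp h3
  exact h2.congr (Filter.Eventually.of_forall fun y => by
    simp only [Complex.Gamma_ofReal, Complex.ofReal_re])

lemma analyticAt_deriv {f : ℝ → ℝ} {x : ℝ} (h : AnalyticAt ℝ f x) :
    AnalyticAt ℝ (deriv f) x := by
  have h2 := ((ContinuousLinearMap.apply ℝ ℝ (1:ℝ)).analyticAt (fderiv ℝ f x)).comp h.fderiv
  exact h2.congr (Filter.Eventually.of_forall fun y => rfl)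

noncomputable def dgam : ℝ → ℝ := fun x => deriv Real.Gamma x / Real.Gamma x

lemma hasDerivAt_logGamma {x : ℝ} (hx : 0 < x) :
    HasDerivAt (fun y => Real.log (Real.Gamma y)) (dgam x) x := by
  have hne : ∀ m : ℕ, x ≠ -(m:ℝ) := by
    intro m h
    have : (0:ℝ) ≤ (m:ℝ) := Nat.cast_nonneg m
    linarith
  exact ((Real.differentiableAt_Gamma hne).hasDerivAt).log (Real.Gamma_pos_of_pos hx).ne'

lemma psi0_eq {x : ℝ} (hx : 0 < x) : Psi0 x = dgam x := (hasDerivAt_logGamma hx).deriv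

lemma dgam_analytic {x : ℝ} (hx : 0 < x) : AnalyticAt ℝ dgam x :=
  (analyticAt_deriv (gammaAnalytic hx)).div (gammaAnalytic hx) (Real.Gamma_pos_of_pos hx).ne'

lemma gammaPdf_nonneg {α : ℝ} (hα : 0 < α) (x : ℝ) : 0 ≤ gammaPdf α x := by
  unfold gammaPdf
  split
  · have := Real.Gamma_pos_of_pos hα
    positivity
  · exact le_refl 0

lemma gammaPdf_meas (α : ℝ) : Measurable fun x => (gammaPdf α x).toNNReal := by
  apply Measurable.real_toNNReal
  unfold gammaPdf
  apply Measurable.ite measurableSet_Ioi _ measurable_const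
  exact ((measurable_const.mul (measurable_id.pow_const _)).mul (measurable_id.neg.exp))

lemma gamma_integral_eq (α l : ℝ) (hα0 : 0 < α) (hαl0 : 0 < α + l) :
    ∫ x, Real.exp (l * (Real.log x - Psi0 α)) ∂(gammaMeasure' α)
      = (Real.Gamma α)⁻¹ * Real.exp (-(l * Psi0 α)) * Real.Gamma (α + l) := by
  have h2 : ∫ x, Real.exp (l * (Real.log x - Psi0 α)) ∂(gammaMeasure' α)
      = ∫ x, (gammaPdf α x).toNNReal • Real.exp (l * (Real.log x - Psi0 α)) :=
    integral_withDensity_eq_integral_smul (gammaPdf_meas α) _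
  rw [h2]
  have h3 : (fun x => (gammaPdf α x).toNNReal • Real.exp (l * (Real.log x - Psi0 α)))
      = Set.indicator (Set.Ioi 0) (fun x =>
          (Real.Gamma α)⁻¹ * Real.exp (-(l * Psi0 α)) * (Real.exp (-x) * x ^ (α + l - 1))) := by
    funext x
    have hsmul : (gammaPdf α x).toNNReal • Real.exp (l * (Real.log x - Psi0 α))
        = gammaPdf α x * Real.exp (l * (Real.log x - Psi0 α)) := by
      rw [NNReal.smul_def, Real.coe_toNNReal _ (gammaPdf_nonneg hα0 x), smul_eq_mul]
    rw [hsmul]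
    by_cases hx : x ∈ Set.Ioi (0:ℝ)
    · rw [Set.indicator_of_mem hx]
      have hx' : 0 < x := hx
      unfold gammaPdf
      rw [if_pos hx']
      have e1 : Real.exp (l * (Real.log x - Psi0 α)) = x ^ l * Real.exp (-(l * Psi0 α)) := by
        rw [Real.rpow_def_of_pos hx', ← Real.exp_add]
        exact congrArg Real.exp (by ring)
      have e2 : x ^ (α + l - 1) = x ^ (α - 1) * x ^ l := by
        rw [← Real.rpow_add hx']
        ring_nf
      rw [e1, e2]
      ring
    · rw [Set.indicator_of_notMem hx]
      have hx' : ¬ 0 < x := hx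
      unfold gammaPdf
      rw [if_neg hx']
      simp
  rw [h3, integral_indicator measurableSet_Ioi, integral_const_mul,
    ← Real.Gamma_eq_integral hαl0]

/-- `log X` for `X ∼ Gamma(α)` is sub-exponential, uniformly over `α ∈ [ε, μ-ε]`. -/
theorem stmt3 (μ ε : ℝ) (hμ : 0 < μ) (hε : ε ∈ Set.Ioo 0 (μ / 2)) :
    ∃ K0 > (0 : ℝ), ∃ lam0 > (0 : ℝ), ∀ α ∈ Set.Icc ε (μ - ε),
      ∀ l ∈ Set.Icc (-lam0) lam0,
        ∫ x, Real.exp (l * (Real.log x - Psi0 α)) ∂(gammaMeasure' α)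
          ≤ Real.exp (K0 * l ^ 2) := by
  obtain ⟨hε0, hεμ⟩ := hε
  set J : Set ℝ := Set.Icc (ε/2) μ with hJ
  have hJpos : ∀ x ∈ J, 0 < x := fun x hx => lt_of_lt_of_le (by linarith) hx.1
  have hcont : ContinuousOn (deriv dgam) J := fun x hx =>
    ((analyticAt_deriv (dgam_analytic (hJpos x hx))).continuousAt).continuousWithinAt
  obtain ⟨C, hC⟩ := isCompact_Icc.exists_bound_of_continuousOn hcont
  set K0 : ℝ := max C 1 with hK0
  have hK0pos : (0:ℝ) < K0 := lt_of_lt_of_le one_pos (le_max_right _ _)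
  refine ⟨K0, hK0pos, ε/2, by linarith, ?_⟩
  intro α hα l hl
  have hα0 : 0 < α := lt_of_lt_of_le hε0 hα.1
  have hαJ : α ∈ J := ⟨by linarith [hα.1], by linarith [hα.2]⟩
  have hlabs : |l| ≤ ε / 2 := abs_le.mpr ⟨hl.1, hl.2⟩
  obtain ⟨hl1, hl2⟩ := abs_le.mp hlabs
  have hαl0 : 0 < α + l := by linarith [hα.1]
  -- Lipschitz bound for dgam on J
  have hlip : ∀ a ∈ J, ∀ b ∈ J, |dgam a - dgam b| ≤ K0 * |a - b| := by
    intro a ha b hb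
    have h := Convex.norm_image_sub_le_of_norm_hasDerivWithin_le
      (f := dgam) (f' := deriv dgam) (s := J) (C := K0)
      (fun x hx => ((dgam_analytic (hJpos x hx)).differentiableAt.hasDerivAt).hasDerivWithinAt)
      (fun x hx => le_trans (hC x hx) (le_max_left C 1)) (convex_Icc _ _) hb ha
    simpa [Real.norm_eq_abs] using h
  -- Taylor-type bound
  have hmem : ∀ t ∈ Set.Icc (0:ℝ) 1, α + t * l ∈ J := by
    intro t ht
    have htl : |t * l| ≤ ε / 2 := by
      rw [abs_mul]
      calc |t| * |l| ≤ 1 * (ε/2) := by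
            apply mul_le_mul _ hlabs (abs_nonneg l) zero_le_one
            rw [abs_of_nonneg ht.1]; exact ht.2
        _ = ε / 2 := one_mul _
    obtain ⟨ha, hb⟩ := abs_le.mp htl
    exact ⟨by linarith [hα.1], by linarith [hα.2]⟩
  have htay : Real.log (Real.Gamma (α + l)) - Real.log (Real.Gamma α) - l * dgam α
      ≤ K0 * l ^ 2 := by
    set F : ℝ → ℝ := fun t => Real.log (Real.Gamma (α + t * l)) - t * (l * dgam α) with hF
    have hF' : ∀ t ∈ Set.Icc (0:ℝ) 1,
        HasDerivWithinAt F (l * dgam (α + t * l) - l * dgam α) (Set.Icc (0:ℝ) 1) t := by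
      intro t ht
      have h1 : HasDerivAt (fun t : ℝ => α + t * l) l t := by
        simpa using ((hasDerivAt_id t).mul_const l).const_add α
      have h2 : HasDerivAt (fun t : ℝ => Real.log (Real.Gamma (α + t * l)))
          (dgam (α + t * l) * l) t := by
        exact (hasDerivAt_logGamma (hJpos _ (hmem t ht))).comp t h1
      have h3' : HasDerivAt (fun t : ℝ => t * (l * dgam α)) (l * dgam α) t := by
        simpa using (hasDerivAt_id t).mul_const (l * dgam α)
      have h3 : HasDerivAt F (l * dgam (α + t * l) - l * dgam α) t := by
        have h4 := h2.sub h3'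
        exact h4.congr_deriv (by ring)
      exact h3.hasDerivWithinAt
    have hbound : ∀ t ∈ Set.Icc (0:ℝ) 1,
        ‖l * dgam (α + t * l) - l * dgam α‖ ≤ K0 * l ^ 2 := by
      intro t ht
      have hd : |dgam (α + t * l) - dgam α| ≤ K0 * |t * l| := by
        have := hlip _ (hmem t ht) _ hαJ
        simpa using this
      have htl1 : |t * l| ≤ |l| := by
        rw [abs_mul]
        calc |t| * |l| ≤ 1 * |l| := by
              apply mul_le_mul _ le_rfl (abs_nonneg l) zero_le_one
              rw [abs_of_nonneg ht.1]; exact ht.2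
          _ = |l| := one_mul _
      calc ‖l * dgam (α + t * l) - l * dgam α‖
          = |l| * |dgam (α + t * l) - dgam α| := by
            rw [← mul_sub, Real.norm_eq_abs, abs_mul]
        _ ≤ |l| * (K0 * |l|) := by
            apply mul_le_mul_of_nonneg_left _ (abs_nonneg l)
            exact le_trans hd (mul_le_mul_of_nonneg_left htl1 hK0pos.le)
        _ = K0 * l ^ 2 := by rw [← sq_abs]; ring
    have h := Convex.norm_image_sub_le_of_norm_hasDerivWithin_le hF' hbound
      (convex_Icc 0 1) (Set.left_mem_Icc.mpr zero_le_one) (Set.right_mem_Icc.mpr zero_le_one)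
    have hF1 : F 1 = Real.log (Real.Gamma (α + l)) - l * dgam α := by simp [hF]
    have hF0 : F 0 = Real.log (Real.Gamma α) := by simp [hF]
    rw [hF1, hF0] at h
    have h' := (abs_le.mp (by simpa [Real.norm_eq_abs] using h)).2
    linarith
  rw [gamma_integral_eq α l hα0 hαl0]
  have h5 : (Real.Gamma α)⁻¹ * Real.exp (-(l * Psi0 α)) * Real.Gamma (α + l)
      = Real.exp (Real.log (Real.Gamma (α + l)) - Real.log (Real.Gamma α) - l * Psi0 α) := by
    rw [Real.exp_sub, Real.exp_sub, Real.exp_log (Real.Gamma_pos_of_pos hαl0),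
      Real.exp_log (Real.Gamma_pos_of_pos hα0), Real.exp_neg]
    field_simp
  rw [h5]
  apply Real.exp_le_exp.mpr
  rw [psi0_eq hα0]
  exact htay
end

section
/- Let {Y_z}_{z ∈ ℤ²} be positive weights and for u ≤ v define the partition function Z_{u,v} = Σ over up-right paths from u to v of the product of weights Y along the path. Let x, y, z ∈ ℤ² with x·e_1 ≤ y·e_1, x·e_2 ≥ y·e_2, and x ≤ z, y ≤ z (and z - e_1, z - e_2 admissible endpoints). Then Z_{x,z}/Z_{x,z-e_1} ≤ Z_{y,z}/Z_{y,z-e_1} and Z_{x,z}/Z_{x,z-e_2} ≥ Z_{y,z}/Z_{y,z-e_2}. -/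
/-- The `j`-th vertex of the up-right path started at `u` whose `i`-th step is
`e₁` if `σ i = true` and `e₂` if `σ i = false`. -/
def pathVertex (u : ℤ × ℤ) (σ : ℕ → Bool) (j : ℕ) : ℤ × ℤ :=
  (u.1 + ((Finset.range j).filter fun i => σ i = true).card,
   u.2 + ((Finset.range j).filter fun i => σ i = false).card)

/-- The polymer partition function `Z_{u,v}`: the sum over all up-right paths from `u`
to `v` of the product of the weights `Y` along the path (including both endpoints);
`Z_{u,v} = 0` if `u ≤ v` fails. -/
noncomputable def Zfun (Y : ℤ × ℤ → ℝ) (u v : ℤ × ℤ) : ℝ :=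
  if u.1 ≤ v.1 ∧ u.2 ≤ v.2 then
    ∑ σ : Fin ((v.1 - u.1).toNat + (v.2 - u.2).toNat) → Bool,
      (if (Finset.univ.filter fun i => σ i = true).card = (v.1 - u.1).toNat then
        ∏ j ∈ Finset.range ((v.1 - u.1).toNat + (v.2 - u.2).toNat + 1),
          Y (pathVertex u
              (fun i => if h : i < (v.1 - u.1).toNat + (v.2 - u.2).toNat then σ ⟨i, h⟩
                        else false) j)
      else 0)
  else 0

/-! Splitting off the last step of a path gives the recursion
`Z_{u,v} = (Z_{u,v-e₁} + Z_{u,v-e₂}) Y_v` for `u ≠ v`. Applied at `z`, both ratio inequalities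
reduce to the crossing inequality `Z_{x,a} Z_{y,b} ≤ Z_{x,b} Z_{y,a}` for `y` down-right of `x`
and `a = z - e₂` down-right of `b = z - e₁`. Each side is linear in the partition functions
ending at `a` and in those ending at `b`, so the crossing inequality follows from the recursion
by induction on the endpoints, down to the degenerate cases `a = b` or `Z_{x,a} Z_{y,b} = 0`. -/

open Finset

def stepSeq {N : ℕ} (σ : Fin N → Bool) : ℕ → Bool :=
  fun i => if h : i < N then σ ⟨i, h⟩ else false

def pathWeight (Y : ℤ × ℤ → ℝ) (u : ℤ × ℤ) {N : ℕ} (σ : Fin N → Bool) : ℝ :=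
  ∏ j ∈ range (N + 1), Y (pathVertex u (stepSeq σ) j)

/-- `Z_{u, u + (m, N - m)}` for `m ≤ N`, and `0` for `m > N`. -/
def pathSum (Y : ℤ × ℤ → ℝ) (u : ℤ × ℤ) (N m : ℕ) : ℝ :=
  ∑ σ : Fin N → Bool, if #{i | σ i = true} = m then pathWeight Y u σ else 0

lemma pathVertex_congr (u : ℤ × ℤ) {σ σ' : ℕ → Bool} {j : ℕ}
    (h : ∀ i < j, σ i = σ' i) : pathVertex u σ j = pathVertex u σ' j := by
  have hfilter (b : Bool) : {i ∈ range j | σ i = b} = {i ∈ range j | σ' i = b} :=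
    filter_congr fun i hi => by rw [h i (mem_range.mp hi)]
  simp only [pathVertex, hfilter]

lemma card_filter_stepSeq {N : ℕ} (σ : Fin N → Bool) (b : Bool) :
    #{i ∈ range N | stepSeq σ i = b} = #{i | σ i = b} := by
  rw [card_filter, card_filter, ← Fin.sum_univ_eq_sum_range]
  simp [stepSeq]

lemma pathVertex_stepSeq_self (u : ℤ × ℤ) {N : ℕ} (σ : Fin N → Bool) :
    pathVertex u (stepSeq σ) N = (u.1 + #{i | σ i = true}, u.2 + #{i | σ i = false}) := by
  simp only [pathVertex, card_filter_stepSeq]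

lemma card_filter_true_add_card_filter_false {N : ℕ} (σ : Fin N → Bool) :
    #{i | σ i = true} + #{i | σ i = false} = N := by
  simpa using card_filter_add_card_filter_not (s := univ) (fun i => σ i = true)

lemma card_filter_snoc {k : ℕ} (τ : Fin k → Bool) (b c : Bool) :
    #{i | (Fin.snoc τ b : Fin (k + 1) → Bool) i = c} =
      #{i | τ i = c} + if b = c then 1 else 0 := by
  rw [card_filter, card_filter, Fin.sum_univ_castSucc]
  simp [Fin.snoc_castSucc, Fin.snoc_last]

lemma pathWeight_snoc (Y : ℤ × ℤ → ℝ) (u : ℤ × ℤ) {k : ℕ} (τ : Fin k → Bool) (b : Bool) :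
    pathWeight Y u (Fin.snoc τ b : Fin (k + 1) → Bool) = pathWeight Y u τ *
      Y (u.1 + #{i | (Fin.snoc τ b : Fin (k + 1) → Bool) i = true},
        u.2 + #{i | (Fin.snoc τ b : Fin (k + 1) → Bool) i = false}) := by
  rw [pathWeight, prod_range_succ, pathVertex_stepSeq_self, pathWeight]
  congr 1
  refine prod_congr rfl fun j hj => congrArg Y (pathVertex_congr u fun i hi => ?_)
  have hik : i < k := by rw [mem_range] at hj; omega
  simp only [stepSeq, dif_pos hik, dif_pos (hik.trans k.lt_succ_self)]
  exact Fin.snoc_castSucc (α := fun _ => Bool) (i := ⟨i, hik⟩) b τ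

lemma Fintype.sum_snoc {α M : Type*} [Fintype α] [AddCommMonoid M] {k : ℕ}
    (f : (Fin (k + 1) → α) → M) :
    ∑ σ, f σ = ∑ a, ∑ τ : Fin k → α, f (Fin.snoc τ a) := by
  rw [← (Fin.snocEquiv fun _ => α).sum_comp, Fintype.sum_prod_type]
  rfl

lemma pathSum_snoc_term (Y : ℤ × ℤ → ℝ) (u : ℤ × ℤ) {k : ℕ} (m : ℕ) (τ : Fin k → Bool)
    (b : Bool) :
    (if #{i | (Fin.snoc τ b : Fin (k + 1) → Bool) i = true} = m then
        pathWeight Y u (Fin.snoc τ b : Fin (k + 1) → Bool) else 0) =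
      (if #{i | τ i = true} + (if b then 1 else 0) = m then pathWeight Y u τ else 0) *
        Y (u.1 + m, u.2 + (k + 1 - m : ℕ)) := by
  have htotal := card_filter_true_add_card_filter_false (Fin.snoc τ b : Fin (k + 1) → Bool)
  by_cases hm : #{i | (Fin.snoc τ b : Fin (k + 1) → Bool) i = true} = m
  · rw [if_pos hm, ← card_filter_snoc, if_pos hm, pathWeight_snoc, hm]
    congr 3
    omega
  · rw [if_neg hm, ← card_filter_snoc, if_neg hm, zero_mul]

lemma pathSum_succ (Y : ℤ × ℤ → ℝ) (u : ℤ × ℤ) (k m : ℕ) :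
    pathSum Y u (k + 1) m =
      ((if m = 0 then 0 else pathSum Y u k (m - 1)) + pathSum Y u k m) *
        Y (u.1 + m, u.2 + (k + 1 - m : ℕ)) := by
  rw [pathSum, Fintype.sum_snoc, Fintype.sum_bool]
  simp only [pathSum_snoc_term, ← sum_mul, ← add_mul, pathSum]
  congr 2
  rcases m with _ | m <;> simp

lemma pathSum_zero_zero (Y : ℤ × ℤ → ℝ) (u : ℤ × ℤ) : pathSum Y u 0 0 = Y u := by
  simp [pathSum, pathWeight, pathVertex]

lemma pathSum_eq_zero_of_lt (Y : ℤ × ℤ → ℝ) (u : ℤ × ℤ) {N m : ℕ} (h : N < m) :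
    pathSum Y u N m = 0 :=
  sum_eq_zero fun σ _ => if_neg fun hm => by
    have := card_filter_le (univ : Finset (Fin N)) (fun i => σ i = true)
    simp only [card_univ, Fintype.card_fin] at this
    omega

lemma pathSum_nonneg {Y : ℤ × ℤ → ℝ} (hY : ∀ z, 0 ≤ Y z) (u : ℤ × ℤ) (N m : ℕ) :
    0 ≤ pathSum Y u N m :=
  sum_nonneg fun _ _ => by
    split_ifs
    exacts [prod_nonneg fun _ _ => hY _, le_rfl]

lemma pathSum_pos {Y : ℤ × ℤ → ℝ} (hY : ∀ z, 0 < Y z) (u : ℤ × ℤ) {N m : ℕ} (h : m ≤ N) :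
    0 < pathSum Y u N m := by
  induction N generalizing m with
  | zero => rw [Nat.le_zero.mp h, pathSum_zero_zero]; exact hY u
  | succ k ih =>
    rw [pathSum_succ]
    refine mul_pos ?_ (hY _)
    rcases m with _ | m
    · simpa using ih (Nat.zero_le k)
    · simpa using
        add_pos_of_pos_of_nonneg (ih (by omega)) (pathSum_nonneg (fun z => (hY z).le) u k _)

lemma Zfun_of_le (Y : ℤ × ℤ → ℝ) {u v : ℤ × ℤ} (h : u ≤ v) :
    Zfun Y u v = pathSum Y u ((v.1 - u.1).toNat + (v.2 - u.2).toNat) (v.1 - u.1).toNat :=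
  if_pos h

lemma Zfun_of_not_le (Y : ℤ × ℤ → ℝ) {u v : ℤ × ℤ} (h : ¬u ≤ v) : Zfun Y u v = 0 :=
  if_neg h

lemma Zfun_eq_pathSum (Y : ℤ × ℤ → ℝ) {u v : ℤ × ℤ} {m n N : ℕ} (hm : v.1 = u.1 + m)
    (hn : v.2 = u.2 + n) (hN : m + n = N) : Zfun Y u v = pathSum Y u N m := by
  rw [Zfun_of_le Y ⟨by omega, by omega⟩]
  congr <;> omega

lemma Zfun_nonneg {Y : ℤ × ℤ → ℝ} (hY : ∀ z, 0 ≤ Y z) (u v : ℤ × ℤ) : 0 ≤ Zfun Y u v := by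
  by_cases h : u ≤ v
  · rw [Zfun_of_le Y h]; exact pathSum_nonneg hY u _ _
  · rw [Zfun_of_not_le Y h]

lemma Zfun_pos {Y : ℤ × ℤ → ℝ} (hY : ∀ z, 0 < Y z) {u v : ℤ × ℤ} (h : u ≤ v) :
    0 < Zfun Y u v := by
  rw [Zfun_of_le Y h]
  exact pathSum_pos hY u (Nat.le_add_right _ _)

lemma Zfun_rec (Y : ℤ × ℤ → ℝ) {u v : ℤ × ℤ} (hne : u ≠ v) :
    Zfun Y u v = (Zfun Y u (v - (1, 0)) + Zfun Y u (v - (0, 1))) * Y v := by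
  by_cases huv : u ≤ v
  swap
  · have hle : v - (1, 0) ≤ v ∧ v - (0, 1) ≤ v := by simp [Prod.le_def]
    rw [Zfun_of_not_le Y huv, Zfun_of_not_le Y fun h => huv (h.trans hle.1),
      Zfun_of_not_le Y fun h => huv (h.trans hle.2), zero_add, zero_mul]
  obtain ⟨m, hm⟩ : ∃ m : ℕ, v.1 = u.1 + m := ⟨(v.1 - u.1).toNat, by have := huv.1; omega⟩
  obtain ⟨n, hn⟩ : ∃ n : ℕ, v.2 = u.2 + n := ⟨(v.2 - u.2).toNat, by have := huv.2; omega⟩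
  obtain ⟨k, hk⟩ : ∃ k, m + n = k + 1 :=
    ⟨m + n - 1, by have : m + n ≠ 0 := fun h => hne (Prod.ext (by omega) (by omega)); omega⟩
  have hfst : Zfun Y u (v - (1, 0)) = if m = 0 then 0 else pathSum Y u k (m - 1) := by
    split_ifs with hm0
    · exact Zfun_of_not_le Y (by simp [Prod.le_def]; omega)
    · exact Zfun_eq_pathSum Y (n := n) (by simp; omega) (by simpa using hn) (by omega)
  have hsnd : Zfun Y u (v - (0, 1)) = pathSum Y u k m := by
    rcases n with _ | n
    · rw [Zfun_of_not_le Y (by simp [Prod.le_def]; omega), pathSum_eq_zero_of_lt Y u (by omega)]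
    · exact Zfun_eq_pathSum Y (n := n) (by simpa using hm) (by simp; omega) (by omega)
  have hend : ((u.1 + m, u.2 + (k + 1 - m : ℕ)) : ℤ × ℤ) = v := Prod.ext (by omega) (by omega)
  rw [Zfun_eq_pathSum Y hm hn hk, pathSum_succ, hfst, hsnd, hend]

lemma Zfun_mul_Zfun_le {Y : ℤ × ℤ → ℝ} (hY : ∀ z, 0 ≤ Y z) {x y : ℤ × ℤ}
    (hxy₁ : x.1 ≤ y.1) (hxy₂ : y.2 ≤ x.2) (a b : ℤ × ℤ) (hab₁ : b.1 ≤ a.1) (hab₂ : a.2 ≤ b.2) :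
    Zfun Y x a * Zfun Y y b ≤ Zfun Y x b * Zfun Y y a := by
  have hRHS := mul_nonneg (Zfun_nonneg hY x b) (Zfun_nonneg hY y a)
  by_cases hxa : x ≤ a
  swap
  · rwa [Zfun_of_not_le Y hxa, zero_mul]
  by_cases hyb : y ≤ b
  swap
  · rwa [Zfun_of_not_le Y hyb, mul_zero]
  obtain ⟨hxa₁, hxa₂⟩ := hxa
  obtain ⟨hyb₁, hyb₂⟩ := hyb
  -- expand the recursion at an endpoint whose two predecessors keep `a` down-right of `b`
  rcases hab₁.lt_or_eq with hlt | heq₁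
  · have ih₁ := Zfun_mul_Zfun_le hY hxy₁ hxy₂ (a - (1, 0)) b (by simp; omega) (by simp; omega)
    have ih₂ := Zfun_mul_Zfun_le hY hxy₁ hxy₂ (a - (0, 1)) b (by simp; omega) (by simp; omega)
    rw [Zfun_rec Y (u := x) (v := a) (by rintro rfl; omega),
      Zfun_rec Y (u := y) (v := a) (by rintro rfl; omega)]
    linarith [mul_le_mul_of_nonneg_right (add_le_add ih₁ ih₂) (hY a)]
  rcases hab₂.lt_or_eq with hlt | heq₂
  · have ih₁ := Zfun_mul_Zfun_le hY hxy₁ hxy₂ a (b - (1, 0)) (by simp; omega) (by simp; omega)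
    have ih₂ := Zfun_mul_Zfun_le hY hxy₁ hxy₂ a (b - (0, 1)) (by simp; omega) (by simp; omega)
    rw [Zfun_rec Y (u := x) (v := b) (by rintro rfl; omega),
      Zfun_rec Y (u := y) (v := b) (by rintro rfl; omega)]
    linarith [mul_le_mul_of_nonneg_right (add_le_add ih₁ ih₂) (hY b)]
  rw [Prod.ext heq₁.symm heq₂, mul_comm]
termination_by (a.1 + a.2 + b.1 + b.2 - (x.1 + x.2 + y.1 + y.2)).toNat
decreasing_by all_goals simp; omega

/-- Monotonicity of ratios of polymer partition functions in the starting point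
along a down-right direction. -/
theorem stmt4 (Y : ℤ × ℤ → ℝ) (hY : ∀ z, 0 < Y z) (x y z : ℤ × ℤ)
    (h1 : x.1 ≤ y.1) (h2 : y.2 ≤ x.2)
    (hx1 : x.1 ≤ z.1 - 1) (hx2 : x.2 ≤ z.2 - 1)
    (hy1 : y.1 ≤ z.1 - 1) (hy2 : y.2 ≤ z.2 - 1) :
    Zfun Y x z / Zfun Y x (z - (1, 0)) ≤ Zfun Y y z / Zfun Y y (z - (1, 0)) ∧
    Zfun Y y z / Zfun Y y (z - (0, 1)) ≤ Zfun Y x z / Zfun Y x (z - (0, 1)) := by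
  have hcross := Zfun_mul_Zfun_le (fun w => (hY w).le) h1 h2 (z - (0, 1)) (z - (1, 0))
    (by simp) (by simp)
  have key := mul_le_mul_of_nonneg_right hcross (hY z).le
  have hx₁ := Zfun_pos hY (show x ≤ z - (1, 0) by simp [Prod.le_def]; omega)
  have hx₂ := Zfun_pos hY (show x ≤ z - (0, 1) by simp [Prod.le_def]; omega)
  have hy₁ := Zfun_pos hY (show y ≤ z - (1, 0) by simp [Prod.le_def]; omega)
  have hy₂ := Zfun_pos hY (show y ≤ z - (0, 1) by simp [Prod.le_def]; omega)
  rw [div_le_div_iff₀ hx₁ hy₁, div_le_div_iff₀ hy₂ hx₂,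
    Zfun_rec Y (u := x) (v := z) (by rintro rfl; omega),
    Zfun_rec Y (u := y) (v := z) (by rintro rfl; omega)]
  constructor <;> linarith
end

section
/- Fix base points (0,0) and (m,-n) with m, n > 0, and a point u with u ≤ (0,0) and u ≤ (m,-n). Consider the boundary polymer rooted at u with antidiagonal boundary 𝒮_u, and the two nested polymers with southwest boundary rooted at (0,0) and (m,-n). Then for any v with v > (0,0) coordinatewise and v > (m,-n) coordinatewise, Q^{(u)}_{0,v}{τ ≤ m} = Q^{(u)}_{(m,-n),v}{τ < -n}: the quenched probability that the polymer from 0 to v takes at most m initial e_1 steps (or starts with an e_2 step) equals the quenched probability that the polymer from (m,-n) to v takes more than n initial e_2 steps. -/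
/-- The partition function of the southwest-boundary polymer rooted at `p` with bulk
weights `Y` and cumulative boundary factors `H` on the axes through `p`, decomposed
according to the exit point from the boundary. -/
noncomputable def Zsw (Y H : ℤ × ℤ → ℝ) (p v : ℤ × ℤ) : ℝ :=
  (∑ j ∈ Finset.Icc (1 : ℤ) (v.1 - p.1), H (p + (j, 0)) * Zfun Y (p + (j, 1)) v) +
  (∑ j ∈ Finset.Icc (1 : ℤ) (v.2 - p.2), H (p + (0, j)) * Zfun Y (p + (1, j)) v)

/-- extension of a finite step sequence by `false`s. -/
def extB {N : ℕ} (σ : Fin N → Bool) : ℕ → Bool := fun i => if h : i < N then σ ⟨i, h⟩ else false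

lemma pathVertex_zero (u : ℤ × ℤ) (σ : ℕ → Bool) : pathVertex u σ 0 = u := by
  simp [pathVertex]

lemma pathVertex_succ (u : ℤ × ℤ) (σ : ℕ → Bool) (j : ℕ) :
    pathVertex u σ (j + 1) = pathVertex u σ j + (if σ j = true then ((1:ℤ),(0:ℤ)) else (0,1)) := by
  unfold pathVertex
  rw [Finset.range_add_one, Finset.filter_insert, Finset.filter_insert]
  by_cases h : σ j = true
  · simp [h, Finset.card_insert_of_notMem, Prod.ext_iff]; ring
  · simp [h, Finset.card_insert_of_notMem, Prod.ext_iff]; ring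

lemma pathVertex_shift (p : ℤ × ℤ) (c : Bool) (g : ℕ → Bool) (j : ℕ) :
    pathVertex p (fun i => if i = 0 then c else g (i - 1)) (j + 1)
      = pathVertex (p + (if c = true then ((1:ℤ),(0:ℤ)) else (0,1))) g j := by
  induction j with
  | zero => rw [pathVertex_succ, pathVertex_zero, pathVertex_zero]; simp
  | succ j ih =>
      rw [pathVertex_succ, ih, pathVertex_succ]
      simp

lemma Zfun_of_not (Y : ℤ × ℤ → ℝ) (u v : ℤ × ℤ) (h : ¬(u.1 ≤ v.1 ∧ u.2 ≤ v.2)) :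
    Zfun Y u v = 0 := if_neg h

lemma Zfun_eq (Y : ℤ × ℤ → ℝ) (u v : ℤ × ℤ) (a b N : ℕ)
    (ha : v.1 - u.1 = a) (hb : v.2 - u.2 = b) (hN : a + b = N) :
    Zfun Y u v = ∑ σ : Fin N → Bool,
      (if (Finset.univ.filter fun i => σ i = true).card = a then
        ∏ j ∈ Finset.range (N + 1), Y (pathVertex u (extB σ) j)
      else 0) := by
  subst hN
  have h1 : u.1 ≤ v.1 := by omega
  have h2 : u.2 ≤ v.2 := by omega
  have e1 : (v.1 - u.1).toNat = a := by omega
  have e2 : (v.2 - u.2).toNat = b := by omega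
  rw [Zfun, if_pos ⟨h1, h2⟩, e1, e2]
  rfl

lemma Zfun_self (Y : ℤ × ℤ → ℝ) (v : ℤ × ℤ) : Zfun Y v v = Y v := by
  rw [Zfun_eq Y v v 0 0 0 (by omega) (by omega) rfl]
  rw [Fintype.sum_eq_single (fun i => false) (by intro x hx; exact absurd (funext fun i => absurd i.2 (by omega)) hx)]
  simp [pathVertex_zero]

lemma card_cons (M : ℕ) (c : Bool) (τ : Fin M → Bool) :
    (Finset.univ.filter fun i => (Fin.cons c τ : Fin (M+1) → Bool) i = true).card
      = (if c = true then 1 else 0) + (Finset.univ.filter fun i => τ i = true).card := by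
  rw [Finset.card_filter, Finset.card_filter, Fin.sum_univ_succ]
  simp

lemma extB_cons (M : ℕ) (c : Bool) (τ : Fin M → Bool) :
    extB (Fin.cons c τ) = fun i => if i = 0 then c else extB τ (i - 1) := by
  funext i
  cases i with
  | zero => simp [extB]
  | succ k =>
    simp only [extB, if_neg (Nat.succ_ne_zero k), Nat.add_sub_cancel]
    by_cases h : k < M
    · rw [dif_pos (by omega : k + 1 < M + 1), dif_pos h]
      exact Fin.cons_succ (α := fun _ : Fin (M+1) => Bool) c τ ⟨k, h⟩
    · rw [dif_neg (by omega), dif_neg (by omega)]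

lemma prod_cons (Y : ℤ × ℤ → ℝ) (p : ℤ × ℤ) (M : ℕ) (c : Bool) (τ : Fin M → Bool) :
    ∏ j ∈ Finset.range (M + 2), Y (pathVertex p (extB (Fin.cons c τ)) j)
      = Y p * ∏ j ∈ Finset.range (M + 1),
          Y (pathVertex (p + (if c = true then ((1:ℤ),(0:ℤ)) else (0,1))) (extB τ) j) := by
  rw [show M + 2 = (M + 1) + 1 from rfl, Finset.prod_range_succ']
  rw [pathVertex_zero, mul_comm]
  congr 1
  apply Finset.prod_congr rfl
  intro j _
  rw [extB_cons, pathVertex_shift]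

lemma Zfun_rec_s9 (Y : ℤ × ℤ → ℝ) (p v : ℤ × ℤ) (h1 : p.1 ≤ v.1) (h2 : p.2 ≤ v.2) (hne : p ≠ v) :
    Zfun Y p v = Y p * (Zfun Y (p + (1, 0)) v + Zfun Y (p + (0, 1)) v) := by
  obtain ⟨a, ha⟩ : ∃ a : ℕ, v.1 - p.1 = a := ⟨(v.1 - p.1).toNat, by omega⟩
  obtain ⟨b, hb⟩ : ∃ b : ℕ, v.2 - p.2 = b := ⟨(v.2 - p.2).toNat, by omega⟩
  have hab : 1 ≤ a + b := by
    rcases Prod.mk.eta (p := p) ▸ Prod.mk.eta (p := v) ▸ hne with h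
    by_contra hc
    exact h (by apply Prod.ext <;> omega)
  obtain ⟨M, hM⟩ : ∃ M : ℕ, a + b = M + 1 := ⟨a + b - 1, by omega⟩
  have htrue : ∑ τ : Fin M → Bool,
      (if (Finset.univ.filter fun i => (Fin.cons true τ : Fin (M+1) → Bool) i = true).card = a then
          ∏ j ∈ Finset.range (M + 2), Y (pathVertex p (extB (Fin.cons true τ)) j) else 0)
      = Y p * Zfun Y (p + (1, 0)) v := by
    rcases a with _ | a'
    · rw [Zfun_of_not Y (p + (1,0)) v (by simp; omega)]
      rw [Finset.sum_eq_zero, mul_zero]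
      intro τ _
      rw [if_neg (by rw [card_cons]; simp)]
    · rw [Zfun_eq Y (p + (1,0)) v a' b M (by simp; omega) (by simp; omega) (by omega),
        Finset.mul_sum]
      apply Finset.sum_congr rfl
      intro τ _
      rw [card_cons, prod_cons]
      simp only [if_true]
      rw [if_congr (by omega : 1 + (Finset.univ.filter fun i => τ i = true).card = a' + 1
            ↔ (Finset.univ.filter fun i => τ i = true).card = a') rfl rfl]
      by_cases hc : (Finset.univ.filter fun i => τ i = true).card = a' <;> simp [hc]
  have hfalse : ∑ τ : Fin M → Bool,
      (if (Finset.univ.filter fun i => (Fin.cons false τ : Fin (M+1) → Bool) i = true).card = a then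
          ∏ j ∈ Finset.range (M + 2), Y (pathVertex p (extB (Fin.cons false τ)) j) else 0)
      = Y p * Zfun Y (p + (0, 1)) v := by
    rcases b with _ | b'
    · rw [Zfun_of_not Y (p + (0,1)) v (by simp; omega)]
      rw [Finset.sum_eq_zero, mul_zero]
      intro τ _
      rw [if_neg ?_]
      rw [card_cons]
      simp only [if_neg (by simp : ¬(false = true)), zero_add]
      have := Finset.card_filter_le Finset.univ (fun i : Fin M => τ i = true)
      simp only [Finset.card_univ, Fintype.card_fin] at this
      omega
    · rw [Zfun_eq Y (p + (0,1)) v a b' M (by simp; omega) (by simp; omega) (by omega),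
        Finset.mul_sum]
      apply Finset.sum_congr rfl
      intro τ _
      rw [card_cons, prod_cons]
      simp only [if_neg (by simp : ¬(false = true)), zero_add]
      by_cases hc : (Finset.univ.filter fun i => τ i = true).card = a <;> simp [hc]
  rw [Zfun_eq Y p v a b (M + 1) ha hb hM]
  rw [← Equiv.sum_comp (Fin.consEquiv (fun _ : Fin (M+1) => Bool)), Fintype.sum_prod_type,
    Fintype.sum_bool]
  simp only [Fin.consEquiv, Equiv.coe_fn_mk]
  exact (congrArg₂ (· + ·) htrue hfalse).trans (mul_add _ _ _).symm

noncomputable def Svv (Y Z : ℤ × ℤ → ℝ) (v p : ℤ × ℤ) : ℝ :=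
  (∑ j ∈ Finset.Icc (1 : ℤ) (v.1 - p.1), Z (p + (j, 0)) * Zfun Y (p + (j, 1)) v) +
  (∑ j ∈ Finset.Icc (1 : ℤ) (v.2 - p.2), Z (p + (0, j)) * Zfun Y (p + (1, j)) v)

lemma Svv_abs (Y Z : ℤ × ℤ → ℝ) (v q : ℤ × ℤ) :
    Svv Y Z v q = (∑ x ∈ Finset.Icc (q.1 + 1) v.1, Z (x, q.2) * Zfun Y (x, q.2 + 1) v) +
      (∑ y ∈ Finset.Icc (q.2 + 1) v.2, Z (q.1, y) * Zfun Y (q.1 + 1, y) v) := by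
  rw [Svv]
  congr 1
  · rw [show Finset.Icc (q.1 + 1) v.1 = Finset.map (addLeftEmbedding q.1) (Finset.Icc 1 (v.1 - q.1))
        by rw [Finset.map_add_left_Icc]; congr 1; ring, Finset.sum_map]
    apply Finset.sum_congr rfl
    intro j _
    have e1 : q + (j, 0) = (q.1 + j, q.2) := by rw [Prod.ext_iff]; simp
    have e2 : q + (j, 1) = (q.1 + j, q.2 + 1) := by rw [Prod.ext_iff]; simp
    rw [e1, e2]
    simp [addLeftEmbedding_apply]
  · rw [show Finset.Icc (q.2 + 1) v.2 = Finset.map (addLeftEmbedding q.2) (Finset.Icc 1 (v.2 - q.2))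
        by rw [Finset.map_add_left_Icc]; congr 1; ring, Finset.sum_map]
    apply Finset.sum_congr rfl
    intro j _
    have e1 : q + (0, j) = (q.1, q.2 + j) := by rw [Prod.ext_iff]; simp
    have e2 : q + (1, j) = (q.1 + 1, q.2 + j) := by rw [Prod.ext_iff]; simp
    rw [e1, e2]
    simp [addLeftEmbedding_apply]

lemma telescopeI (g : ℤ → ℝ) (b K : ℤ) (hK : b ≤ K) :
    ∑ y ∈ Finset.Icc (b + 1) K, (g (y - 1) - g y) = g b - g K := by
  obtain ⟨k, rfl⟩ : ∃ k : ℕ, K = b + k := ⟨(K - b).toNat, by omega⟩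
  clear hK
  induction k with
  | zero => simp
  | succ n ih =>
      rw [show (b : ℤ) + (n + 1 : ℕ) = (b + n) + 1 by push_cast; ring,
        show Finset.Icc (b + 1) ((b + n) + 1) = insert ((b + n) + 1) (Finset.Icc (b + 1) (b + n)) by
          ext x; simp; omega,
        Finset.sum_insert (by simp)]
      rw [ih, show (b : ℤ) + n + 1 - 1 = b + n by ring]
      ring

lemma vertL (Y Z : ℤ × ℤ → ℝ) (v : ℤ × ℤ) (usum : ℤ)
    (hrec : ∀ w : ℤ × ℤ, usum + 1 ≤ w.1 + w.2 → Z w = (Z (w - (1, 0)) + Z (w - (0, 1))) * Y w)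
    (a b : ℤ) (ha : a < v.1) (hb : b < v.2) (hu : usum + 1 ≤ a + b) :
    Z (a, b) * Zfun Y (a, b + 1) v
      + ∑ y ∈ Finset.Icc (b + 1) v.2, Z (a - 1, y) * Zfun Y (a, y) v
      = ∑ y ∈ Finset.Icc (b + 1) v.2, Z (a, y) * Zfun Y (a + 1, y) v := by
  set g : ℤ → ℝ := fun t => Z (a, t) * Zfun Y (a, t + 1) v with hg
  have key : ∑ y ∈ Finset.Icc (b + 1) v.2,
      (Z (a, y) * Zfun Y (a + 1, y) v - Z (a - 1, y) * Zfun Y (a, y) v)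
      = ∑ y ∈ Finset.Icc (b + 1) v.2, (g (y - 1) - g y) := by
    apply Finset.sum_congr rfl
    intro y hy
    simp only [Finset.mem_Icc] at hy
    have hZ : Z (a, y) = (Z (a - 1, y) + Z (a, y - 1)) * Y (a, y) := by
      have h := hrec (a, y) (by simp; omega)
      have e1 : ((a, y) : ℤ × ℤ) - (1, 0) = (a - 1, y) := by rw [Prod.ext_iff]; simp
      have e2 : ((a, y) : ℤ × ℤ) - (0, 1) = (a, y - 1) := by rw [Prod.ext_iff]; simp
      rw [e1, e2] at h; exact h
    have hW : Zfun Y (a, y) v = Y (a, y) * (Zfun Y (a + 1, y) v + Zfun Y (a, y + 1) v) := by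
      have h := Zfun_rec_s9 Y (a, y) v (by simp; omega) (by simp; omega)
        (by intro hc; have : a = v.1 := congrArg Prod.fst hc; omega)
      have e1 : ((a, y) : ℤ × ℤ) + (1, 0) = (a + 1, y) := by rw [Prod.ext_iff]; simp
      have e2 : ((a, y) : ℤ × ℤ) + (0, 1) = (a, y + 1) := by rw [Prod.ext_iff]; simp
      rw [e1, e2] at h; exact h
    simp only [hg]
    rw [show y - 1 + 1 = y by ring]
    rw [hZ, hW]
    ring
  have htel := telescopeI g b v.2 (by omega)
  have hsub : ∑ y ∈ Finset.Icc (b + 1) v.2,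
      (Z (a, y) * Zfun Y (a + 1, y) v - Z (a - 1, y) * Zfun Y (a, y) v)
      = (∑ y ∈ Finset.Icc (b + 1) v.2, Z (a, y) * Zfun Y (a + 1, y) v)
        - ∑ y ∈ Finset.Icc (b + 1) v.2, Z (a - 1, y) * Zfun Y (a, y) v :=
    Finset.sum_sub_distrib _ _
  have hgK : g v.2 = 0 := by
    simp only [hg]
    rw [Zfun_of_not Y (a, v.2 + 1) v (by simp), mul_zero]
  have hg0 : g b = Z (a, b) * Zfun Y (a, b + 1) v := rfl
  rw [key, htel, hgK, hg0] at hsub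
  linarith

lemma horizL (Y Z : ℤ × ℤ → ℝ) (v : ℤ × ℤ) (usum : ℤ)
    (hrec : ∀ w : ℤ × ℤ, usum + 1 ≤ w.1 + w.2 → Z w = (Z (w - (1, 0)) + Z (w - (0, 1))) * Y w)
    (a b : ℤ) (ha : a < v.1) (hb : b < v.2) (hu : usum + 1 ≤ a + b) :
    Z (a, b) * Zfun Y (a + 1, b) v
      + ∑ x ∈ Finset.Icc (a + 1) v.1, Z (x, b - 1) * Zfun Y (x, b) v
      = ∑ x ∈ Finset.Icc (a + 1) v.1, Z (x, b) * Zfun Y (x, b + 1) v := by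
  set g : ℤ → ℝ := fun t => Z (t, b) * Zfun Y (t + 1, b) v with hg
  have key : ∑ x ∈ Finset.Icc (a + 1) v.1,
      (Z (x, b) * Zfun Y (x, b + 1) v - Z (x, b - 1) * Zfun Y (x, b) v)
      = ∑ x ∈ Finset.Icc (a + 1) v.1, (g (x - 1) - g x) := by
    apply Finset.sum_congr rfl
    intro x hx
    simp only [Finset.mem_Icc] at hx
    have hZ : Z (x, b) = (Z (x - 1, b) + Z (x, b - 1)) * Y (x, b) := by
      have h := hrec (x, b) (by simp; omega)
      have e1 : ((x, b) : ℤ × ℤ) - (1, 0) = (x - 1, b) := by rw [Prod.ext_iff]; simp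
      have e2 : ((x, b) : ℤ × ℤ) - (0, 1) = (x, b - 1) := by rw [Prod.ext_iff]; simp
      rw [e1, e2] at h; exact h
    have hW : Zfun Y (x, b) v = Y (x, b) * (Zfun Y (x + 1, b) v + Zfun Y (x, b + 1) v) := by
      have h := Zfun_rec_s9 Y (x, b) v (by simp; omega) (by simp; omega)
        (by intro hc; have : b = v.2 := congrArg Prod.snd hc; omega)
      have e1 : ((x, b) : ℤ × ℤ) + (1, 0) = (x + 1, b) := by rw [Prod.ext_iff]; simp
      have e2 : ((x, b) : ℤ × ℤ) + (0, 1) = (x, b + 1) := by rw [Prod.ext_iff]; simp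
      rw [e1, e2] at h; exact h
    simp only [hg]
    rw [show x - 1 + 1 = x by ring]
    rw [hZ, hW]
    ring
  have htel := telescopeI g a v.1 (by omega)
  have hsub : ∑ x ∈ Finset.Icc (a + 1) v.1,
      (Z (x, b) * Zfun Y (x, b + 1) v - Z (x, b - 1) * Zfun Y (x, b) v)
      = (∑ x ∈ Finset.Icc (a + 1) v.1, Z (x, b) * Zfun Y (x, b + 1) v)
        - ∑ x ∈ Finset.Icc (a + 1) v.1, Z (x, b - 1) * Zfun Y (x, b) v :=
    Finset.sum_sub_distrib _ _
  have hgK : g v.1 = 0 := by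
    simp only [hg]
    rw [Zfun_of_not Y (v.1 + 1, b) v (by simp), mul_zero]
  have hg0 : g a = Z (a, b) * Zfun Y (a + 1, b) v := rfl
  rw [key, htel, hgK, hg0] at hsub
  linarith

lemma Sstep1 (Y Z : ℤ × ℤ → ℝ) (v : ℤ × ℤ) (usum : ℤ)
    (hrec : ∀ w : ℤ × ℤ, usum + 1 ≤ w.1 + w.2 → Z w = (Z (w - (1, 0)) + Z (w - (0, 1))) * Y w)
    (p : ℤ × ℤ) (h1 : p.1 + 1 < v.1) (h2 : p.2 < v.2) (hu : usum ≤ p.1 + p.2) :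
    Svv Y Z v p = Svv Y Z v (p + (1, 0)) := by
  rw [Svv_abs, Svv_abs]
  have e1 : (p + (1, 0)).1 = p.1 + 1 := by simp
  have e2 : (p + (1, 0)).2 = p.2 := by simp
  rw [e1, e2]
  have hsplit : Finset.Icc (p.1 + 1) v.1 = insert (p.1 + 1) (Finset.Icc (p.1 + 1 + 1) v.1) := by
    ext x; simp; omega
  rw [hsplit, Finset.sum_insert (by simp)]
  have hv := vertL Y Z v usum hrec (p.1 + 1) p.2 (by omega) h2 (by omega)
  rw [show p.1 + 1 - 1 = p.1 by ring] at hv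
  linarith

lemma Sstep2 (Y Z : ℤ × ℤ → ℝ) (v : ℤ × ℤ) (usum : ℤ)
    (hrec : ∀ w : ℤ × ℤ, usum + 1 ≤ w.1 + w.2 → Z w = (Z (w - (1, 0)) + Z (w - (0, 1))) * Y w)
    (p : ℤ × ℤ) (h1 : p.1 < v.1) (h2 : p.2 + 1 < v.2) (hu : usum ≤ p.1 + p.2) :
    Svv Y Z v p = Svv Y Z v (p + (0, 1)) := by
  rw [Svv_abs, Svv_abs]
  have e1 : (p + (0, 1)).1 = p.1 := by simp
  have e2 : (p + (0, 1)).2 = p.2 + 1 := by simp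
  rw [e1, e2]
  have hsplit : Finset.Icc (p.2 + 1) v.2 = insert (p.2 + 1) (Finset.Icc (p.2 + 1 + 1) v.2) := by
    ext x; simp; omega
  rw [hsplit, Finset.sum_insert (by simp)]
  have hv := horizL Y Z v usum hrec p.1 (p.2 + 1) h1 (by omega) (by omega)
  rw [show p.2 + 1 - 1 = p.2 by ring] at hv
  linarith

lemma Svv_base (Y Z : ℤ × ℤ → ℝ) (v : ℤ × ℤ) (usum : ℤ)
    (hrec : ∀ w : ℤ × ℤ, usum + 1 ≤ w.1 + w.2 → Z w = (Z (w - (1, 0)) + Z (w - (0, 1))) * Y w)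
    (hu : usum + 1 ≤ v.1 + v.2) :
    Svv Y Z v (v.1 - 1, v.2 - 1) = Z v := by
  rw [Svv_abs]
  have e1 : (((v.1 - 1 : ℤ), (v.2 - 1 : ℤ)) : ℤ × ℤ).1 = v.1 - 1 := rfl
  have e2 : (((v.1 - 1 : ℤ), (v.2 - 1 : ℤ)) : ℤ × ℤ).2 = v.2 - 1 := rfl
  rw [e1, e2, show v.1 - 1 + 1 = v.1 by ring, show v.2 - 1 + 1 = v.2 by ring,
    Finset.Icc_self, Finset.Icc_self, Finset.sum_singleton, Finset.sum_singleton]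
  have hvv : ((v.1, v.2) : ℤ × ℤ) = v := by rw [Prod.ext_iff]; simp
  rw [hvv, Zfun_self]
  have h := hrec v hu
  have f1 : v - (1, 0) = (v.1 - 1, v.2) := by rw [Prod.ext_iff]; simp
  have f2 : v - (0, 1) = (v.1, v.2 - 1) := by rw [Prod.ext_iff]; simp
  rw [f1, f2] at h
  rw [h]
  ring

lemma Svv_eq_Z (Y Z : ℤ × ℤ → ℝ) (v : ℤ × ℤ) (usum : ℤ)
    (hrec : ∀ w : ℤ × ℤ, usum + 1 ≤ w.1 + w.2 → Z w = (Z (w - (1, 0)) + Z (w - (0, 1))) * Y w)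
    (husum : usum ≤ 0) (hv1 : 1 ≤ v.1) (hv2 : 1 ≤ v.2) :
    Svv Y Z v (0, 0) = Z v := by
  have walk_h : ∀ k : ℕ, (k : ℤ) + 1 ≤ v.1 → Svv Y Z v ((0 : ℤ), (0 : ℤ)) = Svv Y Z v ((k : ℤ), 0) := by
    intro k
    induction k with
    | zero => intro _; norm_num
    | succ j ih =>
        intro hk
        push_cast at hk ⊢
        have step := Sstep1 Y Z v usum hrec ((j : ℤ), 0) (by simp; omega) (by simp; omega)
          (by simp; omega)
        have e : (((j : ℤ), (0 : ℤ)) : ℤ × ℤ) + (1, 0) = ((j : ℤ) + 1, 0) := by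
          rw [Prod.ext_iff]; simp
        rw [e] at step
        rw [ih (by omega), step]
  have walk_v : ∀ k : ℕ, (k : ℤ) + 1 ≤ v.2 →
      Svv Y Z v (v.1 - 1, 0) = Svv Y Z v (v.1 - 1, (k : ℤ)) := by
    intro k
    induction k with
    | zero => intro _; norm_num
    | succ j ih =>
        intro hk
        push_cast at hk ⊢
        have step := Sstep2 Y Z v usum hrec (v.1 - 1, (j : ℤ)) (by simp) (by simp; omega)
          (by simp; omega)
        have e : (((v.1 - 1 : ℤ), (j : ℤ)) : ℤ × ℤ) + (0, 1) = (v.1 - 1, (j : ℤ) + 1) := by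
          rw [Prod.ext_iff]; simp
        rw [e] at step
        rw [ih (by omega), step]
  have h1 := walk_h (v.1 - 1).toNat (by omega)
  have h2 := walk_v (v.2 - 1).toNat (by omega)
  rw [show (((v.1 - 1).toNat : ℤ)) = v.1 - 1 by omega] at h1
  rw [show (((v.2 - 1).toNat : ℤ)) = v.2 - 1 by omega] at h2
  rw [h1, h2, Svv_base Y Z v usum hrec (by omega)]

lemma Svv_row (Y Z : ℤ × ℤ → ℝ) (v : ℤ × ℤ) (usum : ℤ)
    (hrec : ∀ w : ℤ × ℤ, usum + 1 ≤ w.1 + w.2 → Z w = (Z (w - (1, 0)) + Z (w - (0, 1))) * Y w)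
    (husum : usum ≤ 0) (hv2 : 0 < v.2) :
    ∀ k : ℕ, (k : ℤ) + 1 ≤ v.1 → Svv Y Z v ((0 : ℤ), (0 : ℤ)) = Svv Y Z v ((k : ℤ), 0) := by
  intro k
  induction k with
  | zero => intro _; norm_num
  | succ j ih =>
      intro hk
      push_cast at hk ⊢
      have step := Sstep1 Y Z v usum hrec ((j : ℤ), 0) (by simp; omega) (by simp; omega)
        (by simp; omega)
      have e : (((j : ℤ), (0 : ℤ)) : ℤ × ℤ) + (1, 0) = ((j : ℤ) + 1, 0) := by
        rw [Prod.ext_iff]; simp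
      rw [e] at step
      rw [ih (by omega), step]

lemma Svv_col (Y Z : ℤ × ℤ → ℝ) (v : ℤ × ℤ) (usum : ℤ) (m n : ℤ)
    (hrec : ∀ w : ℤ × ℤ, usum + 1 ≤ w.1 + w.2 → Z w = (Z (w - (1, 0)) + Z (w - (0, 1))) * Y w)
    (husum : usum ≤ m - n) (hv1 : m < v.1) (hv2 : 0 < v.2) :
    ∀ k : ℕ, (k : ℤ) ≤ n → Svv Y Z v (m, -(k : ℤ)) = Svv Y Z v (m, 0) := by
  intro k
  induction k with
  | zero => intro _; norm_num
  | succ j ih =>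
      intro hk
      push_cast at hk ⊢
      have step := Sstep2 Y Z v usum hrec (m, -((j : ℤ) + 1)) (by simp; omega) (by simp; omega)
        (by simp; omega)
      have e : ((m, -((j : ℤ) + 1)) : ℤ × ℤ) + (0, 1) = (m, -(j : ℤ)) := by
        rw [Prod.ext_iff]; constructor <;> simp
      rw [e] at step
      rw [step, ih (by omega)]

lemma sum_Icc_split (f : ℤ → ℝ) (a b c : ℤ) (h1 : a ≤ b + 1) (h2 : b ≤ c) :
    ∑ x ∈ Finset.Icc a c, f x = ∑ x ∈ Finset.Icc a b, f x + ∑ x ∈ Finset.Icc (b + 1) c, f x := by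
  have hd : Disjoint (Finset.Icc a b) (Finset.Icc (b + 1) c) := by
    rw [Finset.disjoint_left]
    intro x hx hy
    simp only [Finset.mem_Icc] at hx hy
    omega
  rw [← Finset.sum_union hd]
  congr 1
  ext x
  simp only [Finset.mem_union, Finset.mem_Icc]
  omega

lemma Zsw_div (Y Z : ℤ × ℤ → ℝ) (c : ℝ) (p v : ℤ × ℤ) :
    Zsw Y (fun w => Z w / c) p v = Svv Y Z v p / c := by
  rw [Zsw, Svv, add_div, Finset.sum_div, Finset.sum_div]
  congr 1 <;> (apply Finset.sum_congr rfl; intro j _; rw [div_mul_eq_mul_div])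

lemma div_div_div_same' (x y c : ℝ) (hc : c ≠ 0) : x / c / (y / c) = x / y := by
  rcases eq_or_ne y 0 with h | h
  · simp [h]
  · field_simp

/-- The exit-time identity for two nested southwest-boundary polymers rooted at `(0,0)`
and `(m,-n)` inside an outer polymer rooted at `u` with antidiagonal boundary:
`Q^{(u)}_{0,v}{τ ≤ m} = Q^{(u)}_{(m,-n),v}{τ < -n}`. -/
theorem stmt9 (Y Z : ℤ × ℤ → ℝ) (hY : ∀ w, 0 < Y w) (u : ℤ × ℤ) (m n : ℤ)
    (hm : 0 < m) (hn : 0 < n)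
    (hu0 : u.1 ≤ 0 ∧ u.2 ≤ 0) (hu1 : u.1 ≤ m ∧ u.2 ≤ -n)
    (hZpos : ∀ w, 0 < Z w)
    (hZrec : ∀ w : ℤ × ℤ, u.1 + u.2 + 1 ≤ w.1 + w.2 →
        Z w = (Z (w - (1, 0)) + Z (w - (0, 1))) * Y w)
    (v : ℤ × ℤ) (hv1 : m < v.1) (hv2 : 0 < v.2) :
    ((∑ j ∈ Finset.Icc (1 : ℤ) m,
          (Z ((j, 0)) / Z ((0, 0))) * Zfun Y ((j, 1)) v) +
      (∑ j ∈ Finset.Icc (1 : ℤ) v.2,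
          (Z ((0, j)) / Z ((0, 0))) * Zfun Y ((1, j)) v)) /
        Zsw Y (fun w => Z w / Z ((0, 0))) ((0, 0)) v
    = (∑ j ∈ Finset.Icc (n + 1) (v.2 + n),
          (Z (((m, -n) : ℤ × ℤ) + (0, j)) / Z ((m, -n))) *
            Zfun Y (((m, -n) : ℤ × ℤ) + (1, j)) v) /
        Zsw Y (fun w => Z w / Z ((m, -n))) ((m, -n)) v := by
  set usum : ℤ := u.1 + u.2 with husum
  have hrec : ∀ w : ℤ × ℤ, usum + 1 ≤ w.1 + w.2 →
      Z w = (Z (w - (1, 0)) + Z (w - (0, 1))) * Y w := by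
    intro w hw; exact hZrec w (by omega)
  have hZ0 : Z ((0 : ℤ), (0 : ℤ)) ≠ 0 := ne_of_gt (hZpos _)
  have hZmn : Z ((m, -n)) ≠ 0 := ne_of_gt (hZpos _)
  have hZv : Z v ≠ 0 := ne_of_gt (hZpos _)
  -- the three values of Svv
  have hS00 : Svv Y Z v ((0 : ℤ), (0 : ℤ)) = Z v :=
    Svv_eq_Z Y Z v usum hrec (by omega) (by omega) (by omega)
  have hSm0 : Svv Y Z v (m, 0) = Z v := by
    have h := Svv_row Y Z v usum hrec (by omega) hv2 m.toNat (by omega)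
    rw [show ((m.toNat : ℤ)) = m by omega] at h
    rw [← h, hS00]
  have hSmn : Svv Y Z v ((m, -n)) = Z v := by
    have h := Svv_col Y Z v usum m n hrec (by omega) hv1 hv2 n.toNat (by omega)
    rw [show ((n.toNat : ℤ)) = n by omega] at h
    rw [h, hSm0]
  -- absolute forms
  have habs0 : Svv Y Z v ((0 : ℤ), (0 : ℤ))
      = (∑ x ∈ Finset.Icc (1 : ℤ) v.1, Z (x, 0) * Zfun Y (x, 1) v)
        + ∑ y ∈ Finset.Icc (1 : ℤ) v.2, Z (0, y) * Zfun Y (1, y) v := by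
    rw [Svv_abs]
    norm_num
  have habsm : Svv Y Z v (m, 0)
      = (∑ x ∈ Finset.Icc (m + 1) v.1, Z (x, 0) * Zfun Y (x, 1) v)
        + ∑ y ∈ Finset.Icc (1 : ℤ) v.2, Z (m, y) * Zfun Y (m + 1, y) v := by
    rw [Svv_abs]
    norm_num
  set B : ℝ := ∑ y ∈ Finset.Icc (1 : ℤ) v.2, Z (m, y) * Zfun Y (m + 1, y) v with hB
  set R : ℝ := ∑ x ∈ Finset.Icc (m + 1) v.1, Z (x, 0) * Zfun Y (x, 1) v with hR
  -- left numerator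
  have hnumL : (∑ j ∈ Finset.Icc (1 : ℤ) m, (Z ((j, 0)) / Z ((0, 0))) * Zfun Y ((j, 1)) v)
      + (∑ j ∈ Finset.Icc (1 : ℤ) v.2, (Z ((0, j)) / Z ((0, 0))) * Zfun Y ((1, j)) v)
      = B / Z ((0, 0)) := by
    have hsplit := sum_Icc_split (fun x => Z (x, 0) * Zfun Y (x, 1) v) 1 m v.1
      (by omega) (by omega)
    have t1 : ∑ j ∈ Finset.Icc (1 : ℤ) m, (Z ((j, 0)) / Z ((0, 0))) * Zfun Y ((j, 1)) v
        = (∑ j ∈ Finset.Icc (1 : ℤ) m, Z ((j, 0)) * Zfun Y ((j, 1)) v) / Z ((0, 0)) := by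
      rw [Finset.sum_div]
      apply Finset.sum_congr rfl
      intro j _
      rw [div_mul_eq_mul_div]
    have t2 : ∑ j ∈ Finset.Icc (1 : ℤ) v.2, (Z ((0, j)) / Z ((0, 0))) * Zfun Y ((1, j)) v
        = (∑ j ∈ Finset.Icc (1 : ℤ) v.2, Z ((0, j)) * Zfun Y ((1, j)) v) / Z ((0, 0)) := by
      rw [Finset.sum_div]
      apply Finset.sum_congr rfl
      intro j _
      rw [div_mul_eq_mul_div]
    rw [t1, t2, ← add_div]
    congr 1
    have e1 : Z v = (∑ x ∈ Finset.Icc (1 : ℤ) v.1, Z (x, 0) * Zfun Y (x, 1) v)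
        + ∑ y ∈ Finset.Icc (1 : ℤ) v.2, Z (0, y) * Zfun Y (1, y) v := by
      rw [← habs0, hS00]
    have e2 : Z v = R + B := by rw [← habsm, hSm0]
    have e3 := hsplit
    linarith
  -- right numerator
  have hnumR : (∑ j ∈ Finset.Icc (n + 1) (v.2 + n),
        (Z (((m, -n) : ℤ × ℤ) + (0, j)) / Z ((m, -n))) *
          Zfun Y (((m, -n) : ℤ × ℤ) + (1, j)) v)
      = B / Z ((m, -n)) := by
    have hridx : Finset.Icc (n + 1) (v.2 + n)
        = Finset.map (addLeftEmbedding n) (Finset.Icc (1 : ℤ) v.2) := by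
      rw [Finset.map_add_left_Icc]
      congr 1
      ring
    rw [hridx, Finset.sum_map, hB, Finset.sum_div]
    apply Finset.sum_congr rfl
    intro y _
    have e1 : ((m, -n) : ℤ × ℤ) + (0, addLeftEmbedding n y) = (m, y) := by
      rw [Prod.ext_iff]
      constructor <;> simp [addLeftEmbedding_apply]
    have e2 : ((m, -n) : ℤ × ℤ) + (1, addLeftEmbedding n y) = (m + 1, y) := by
      rw [Prod.ext_iff]
      constructor <;> simp [addLeftEmbedding_apply]
    rw [e1, e2, div_mul_eq_mul_div]
  rw [hnumL, hnumR, Zsw_div, Zsw_div, hS00, hSmn,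
    div_div_div_same' B (Z v) (Z ((0, 0))) hZ0,
    div_div_div_same' B (Z v) (Z ((m, -n))) hZmn]
end

section
/- Let 0 < ε < μ/2, ρ ∈ [ε, μ-ε], and define the characteristic direction ξ[ρ] = (Ψ_1(ρ), Ψ_1(μ-ρ))/(Ψ_1(ρ)+Ψ_1(μ-ρ)), where Ψ_1 is the trigamma function, and v_N = (⌊N ξ[ρ]·e_1⌋, ⌊N ξ[ρ]·e_2⌋). Then there exist constants C_1, N_0, c_0 > 0 depending only on ε such that for all N ≥ N_0 and 1 ≤ s ≤ c_0 N^{1/3}: Λ(v_N - ⌊sN^{2/3}⌋e_1 + ⌊sN^{2/3}⌋e_2) - ⌊sN^{2/3}⌋Ψ_0(μ-ρ) + ⌊sN^{2/3}⌋Ψ_0(ρ) - Λ(v_N) ≤ -C_1 s² N^{1/3}. -/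
/-- The trigamma function `Ψ₁ = Ψ₀'`. -/
noncomputable def Psi1 : ℝ → ℝ := deriv Psi0

/-- The characteristic direction `ξ[ρ]` of the inverse-gamma polymer with parameter `μ`. -/
noncomputable def xiDir (μ ρ : ℝ) : ℝ × ℝ :=
  (Psi1 ρ / (Psi1 ρ + Psi1 (μ - ρ)), Psi1 (μ - ρ) / (Psi1 ρ + Psi1 (μ - ρ)))

open Filter Topology Finset


namespace Stmt11Aux

noncomputable def D1 (x : ℝ) : ℝ := ∑' n : ℕ, 1 / (x + n) ^ 2
noncomputable def D2 (x : ℝ) : ℝ := ∑' n : ℕ, -2 / (x + n) ^ 3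
noncomputable def g1 (x : ℝ) : ℝ :=
  -Real.eulerMascheroniConstant + -1 / x +
    ∑' k : ℕ, (1 / ((k : ℝ) + 1) - 1 / (x + ((k : ℝ) + 1)))

noncomputable def Lf (n : ℕ) (x : ℝ) : ℝ :=
  x * Real.log n + Real.log (Nat.factorial n) - ∑ k ∈ range (n + 1), Real.log (x + k)
noncomputable def L1 (n : ℕ) (x : ℝ) : ℝ :=
  Real.log n - ∑ k ∈ range (n + 1), 1 / (x + k)
noncomputable def L2 (n : ℕ) (x : ℝ) : ℝ := ∑ k ∈ range (n + 1), 1 / (x + k) ^ 2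
noncomputable def L3 (n : ℕ) (x : ℝ) : ℝ := ∑ k ∈ range (n + 1), -2 / (x + k) ^ 3

lemma summable_pow_shift {a : ℝ} (ha : 0 < a) {p : ℕ} (hp : 1 < p) :
    Summable (fun n : ℕ => 1 / (a + n) ^ p) := by
  have h := (Real.summable_one_div_nat_add_rpow a p).2 (by exact_mod_cast hp)
  refine h.congr fun n => ?_
  have h1 : (0:ℝ) < (n : ℝ) + a := by positivity
  rw [abs_of_pos h1, add_comm (n:ℝ) a, ← Real.rpow_natCast (a + n) p]

lemma summable_D1 {x : ℝ} (hx : 0 < x) : Summable (fun n : ℕ => 1 / (x + n) ^ 2) :=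
  summable_pow_shift hx one_lt_two

lemma summable_D2aux {x : ℝ} (hx : 0 < x) : Summable (fun n : ℕ => 2 / (x + n) ^ 3) := by
  have := (summable_pow_shift hx (by norm_num : (1:ℕ) < 3)).mul_left 2
  refine this.congr fun n => by ring

lemma D1_pos {x : ℝ} (hx : 0 < x) : 0 < D1 x := by
  refine Summable.tsum_pos (summable_D1 hx) (fun i => by positivity) 0 (by positivity)

lemma D1_ge {x : ℝ} (hx : 0 < x) : 1 / x ^ 2 ≤ D1 x := by
  have := Summable.le_tsum (summable_D1 hx) 0 (fun j _ => by positivity)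
  simpa [D1] using this

lemma D1_anti {x y : ℝ} (hx : 0 < x) (hxy : x ≤ y) : D1 y ≤ D1 x := by
  refine Summable.tsum_le_tsum (fun n => ?_) (summable_D1 (lt_of_lt_of_le hx hxy)) (summable_D1 hx)
  have h1 : (0:ℝ) < x + n := by positivity
  gcongr

lemma D2_neg {x : ℝ} (hx : 0 < x) : D2 x < 0 := by
  have h : D2 x = -∑' n : ℕ, 2 / (x + n) ^ 3 := by
    rw [← tsum_neg]; exact tsum_congr fun n => by ring
  rw [h, neg_lt, neg_zero]
  exact Summable.tsum_pos (summable_D2aux hx) (fun i => by positivity) 0 (by positivity)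

lemma hasDerivAt_Lf (n : ℕ) {x : ℝ} (hx : 0 < x) : HasDerivAt (Lf n) (L1 n x) x := by
  have hsum : HasDerivAt (fun y : ℝ => ∑ k ∈ range (n + 1), Real.log (y + k))
      (∑ k ∈ range (n + 1), 1 / (x + k)) x := by
    refine HasDerivAt.fun_sum fun k _ => ?_
    have h0 : (0:ℝ) < x + k := by positivity
    simpa [one_div] using (((hasDerivAt_id x).add_const (k : ℝ)).log h0.ne')
  have h1 : HasDerivAt (fun y : ℝ => y * Real.log n + Real.log (Nat.factorial n)) (Real.log n) x := by
    simpa using ((hasDerivAt_id x).mul_const (Real.log n)).add_const (Real.log (Nat.factorial n))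
  exact h1.fun_sub hsum

lemma hasDerivAt_L1 (n : ℕ) {x : ℝ} (hx : 0 < x) : HasDerivAt (L1 n) (L2 n x) x := by
  have hsum : HasDerivAt (fun y : ℝ => ∑ k ∈ range (n + 1), 1 / (y + k))
      (∑ k ∈ range (n + 1), -1 / (x + k) ^ 2) x := by
    refine HasDerivAt.fun_sum fun k _ => ?_
    have h0 : (0:ℝ) < x + k := by positivity
    have h := ((hasDerivAt_id x).add_const (k : ℝ)).fun_inv h0.ne'
    have h2 : HasDerivAt (fun y : ℝ => 1 / (y + k)) (-1 / (x + k) ^ 2) x := by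
      refine HasDerivAt.congr_of_eventuallyEq ?_ (Filter.Eventually.of_forall fun y => one_div _)
      simpa using h
    exact h2
  have h1 : HasDerivAt (L1 n) (0 - ∑ k ∈ range (n + 1), -1 / (x + k) ^ 2) x :=
    (hasDerivAt_const x (Real.log n)).sub hsum
  have heq : (0 : ℝ) - ∑ k ∈ range (n + 1), -1 / (x + k) ^ 2 = L2 n x := by
    rw [L2, zero_sub, ← Finset.sum_neg_distrib]
    exact Finset.sum_congr rfl fun k _ => by ring
  rw [heq] at h1; exact h1

lemma hasDerivAt_L2 (n : ℕ) {x : ℝ} (hx : 0 < x) : HasDerivAt (L2 n) (L3 n x) x := by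
  refine HasDerivAt.fun_sum fun k _ => ?_
  have h0 : (0:ℝ) < x + k := by positivity
  have hsq : HasDerivAt (fun y : ℝ => (y + k) ^ 2) (2 * (x + k)) x := by
    simpa using ((hasDerivAt_id x).add_const (k : ℝ)).fun_pow 2
  have h := hsq.inv (by positivity : ((x + (k:ℝ)) ^ 2) ≠ 0)
  have heq : -(2 * (x + (k:ℝ))) / ((x + k) ^ 2) ^ 2 = -2 / (x + k) ^ 3 := by
    field_simp
  rw [heq] at h
  refine HasDerivAt.congr_of_eventuallyEq h (Filter.Eventually.of_forall fun y => one_div _)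


lemma harmonic_cast (n : ℕ) : ((harmonic n : ℚ) : ℝ) = ∑ k ∈ range n, 1 / ((k : ℝ) + 1) := by
  rw [harmonic]
  push_cast
  exact Finset.sum_congr rfl fun k _ => by rw [one_div]

lemma L1_decomp (n : ℕ) (x : ℝ) :
    L1 n x = (Real.log n - ((harmonic n : ℚ) : ℝ)) + -1 / x +
      ∑ k ∈ range n, (1 / ((k : ℝ) + 1) - 1 / (x + ((k : ℝ) + 1))) := by
  rw [L1, Finset.sum_range_succ' (fun k => 1 / (x + (k : ℝ))) n, Finset.sum_sub_distrib,
    harmonic_cast]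
  push_cast
  ring

lemma tendstoUniformlyOn_const_seq {c : ℕ → ℝ} {L : ℝ} (h : Tendsto c atTop (𝓝 L)) (s : Set ℝ) :
    TendstoUniformlyOn (fun n (_ : ℝ) => c n) (fun _ => L) atTop s := by
  rw [Metric.tendstoUniformlyOn_iff]
  intro ε hε
  filter_upwards [Metric.tendsto_nhds.mp h ε hε] with n hn x _
  rwa [dist_comm]

lemma tendstoUniformlyOn_self (f : ℝ → ℝ) (s : Set ℝ) :
    TendstoUniformlyOn (fun _ : ℕ => f) f atTop s := by
  rw [Metric.tendstoUniformlyOn_iff]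
  intro ε hε
  filter_upwards with n x _
  simpa using hε

lemma tendstoUniformlyOn_L1 {a b : ℝ} (ha : 0 < a) :
    TendstoUniformlyOn L1 g1 atTop (Set.Ioo a b) := by
  by_cases hab : a < b
  case neg =>
    have : Set.Ioo a b = ∅ := Set.Ioo_eq_empty hab
    rw [this]
    exact tendstoUniformlyOn_empty
  have hsum : Summable (fun k : ℕ => b / ((k : ℝ) + 1) ^ 2) := by
    have h := (summable_pow_shift one_pos (p := 2) one_lt_two).mul_left b
    exact h.congr fun n => by rw [add_comm 1 (n : ℝ)]; ring
  have hC : TendstoUniformlyOn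
      (fun n (x : ℝ) => ∑ k ∈ range n, (1 / ((k : ℝ) + 1) - 1 / (x + ((k : ℝ) + 1))))
      (fun x => ∑' k : ℕ, (1 / ((k : ℝ) + 1) - 1 / (x + ((k : ℝ) + 1)))) atTop (Set.Ioo a b) := by
    refine tendstoUniformlyOn_tsum_nat hsum ?_
    intro k x hx
    have hx0 : 0 < x := ha.trans hx.1
    have h1 : (0:ℝ) < (k : ℝ) + 1 := by positivity
    have h2 : (0:ℝ) < x + ((k : ℝ) + 1) := by positivity
    have heq : 1 / ((k : ℝ) + 1) - 1 / (x + ((k : ℝ) + 1)) =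
        x / (((k : ℝ) + 1) * (x + ((k : ℝ) + 1))) := by
      field_simp
      ring
    rw [Real.norm_eq_abs, heq, abs_of_pos (by positivity)]
    have hb : x ≤ b := le_of_lt hx.2
    have : x / (((k : ℝ) + 1) * (x + ((k : ℝ) + 1))) ≤ b / (((k : ℝ) + 1) * ((k : ℝ) + 1)) := by
      refine div_le_div₀ (le_of_lt (ha.trans hab)) hb (by positivity) ?_
      refine mul_le_mul_of_nonneg_left (by linarith) h1.le
    calc x / (((k : ℝ) + 1) * (x + ((k : ℝ) + 1))) ≤ b / (((k : ℝ) + 1) * ((k : ℝ) + 1)) := this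
      _ = b / ((k : ℝ) + 1) ^ 2 := by rw [sq]
  have hA : TendstoUniformlyOn (fun (n : ℕ) (_ : ℝ) => Real.log n - ((harmonic n : ℚ) : ℝ))
      (fun _ => -Real.eulerMascheroniConstant) atTop (Set.Ioo a b) := by
    refine tendstoUniformlyOn_const_seq ?_ _
    have h := Real.tendsto_harmonic_sub_log.neg
    refine h.congr fun n => by ring
  have hB := tendstoUniformlyOn_self (fun x : ℝ => -1 / x) (Set.Ioo a b)
  have hcomb := (hA.add hB).add hC
  refine (hcomb.congr ?_).congr_right ?_
  · filter_upwards with n x hx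
    exact (L1_decomp n x).symm
  · intro x hx
    rfl

lemma tendstoUniformlyOn_L2 {a b : ℝ} (ha : 0 < a) :
    TendstoUniformlyOn L2 D1 atTop (Set.Ioo a b) := by
  have base := tendstoUniformlyOn_tsum_nat (f := fun (k : ℕ) (x : ℝ) => 1 / (x + k) ^ 2)
    (summable_pow_shift ha one_lt_two) (s := Set.Ioo a b) ?_
  · intro u hu
    exact (Filter.tendsto_add_atTop_nat 1).eventually (base u hu)
  · intro k x hx
    have hx0 : 0 < x := ha.trans hx.1
    rw [Real.norm_eq_abs, abs_of_pos (by positivity)]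
    refine one_div_le_one_div_of_le (by positivity) ?_
    refine pow_le_pow_left₀ (by positivity) (by linarith [hx.1]) 2

lemma tendstoUniformlyOn_L3 {a b : ℝ} (ha : 0 < a) :
    TendstoUniformlyOn L3 D2 atTop (Set.Ioo a b) := by
  have hsum : Summable (fun k : ℕ => 2 / (a + k) ^ 3) := by
    have := (summable_pow_shift ha (by norm_num : (1:ℕ) < 3)).mul_left 2
    exact this.congr fun n => by ring
  have base := tendstoUniformlyOn_tsum_nat (f := fun (k : ℕ) (x : ℝ) => -2 / (x + k) ^ 3)
    hsum (s := Set.Ioo a b) ?_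
  · intro u hu
    exact (Filter.tendsto_add_atTop_nat 1).eventually (base u hu)
  · intro k x hx
    have hx0 : 0 < x := ha.trans hx.1
    have h1 : (0:ℝ) < x + k := by positivity
    rw [Real.norm_eq_abs, abs_div]
    rw [abs_of_pos (by positivity : (0:ℝ) < (x + (k:ℝ)) ^ 3)]
    have : |(-2 : ℝ)| = 2 := by norm_num
    rw [this, div_le_div_iff₀ (by positivity) (by positivity)]
    have h3 : (a + (k:ℝ)) ^ 3 ≤ (x + (k:ℝ)) ^ 3 :=
      pow_le_pow_left₀ (by positivity) (by linarith [hx.1]) 3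
    nlinarith

lemma tendsto_Lf {x : ℝ} (hx : 0 < x) :
    Tendsto (fun n => Lf n x) atTop (𝓝 (Real.log (Real.Gamma x))) := by
  have hpos : 0 < Real.Gamma x := Real.Gamma_pos_of_pos hx
  have h1 : Tendsto (fun n => Real.log (Real.GammaSeq x n)) atTop
      (𝓝 (Real.log (Real.Gamma x))) :=
    (Real.continuousAt_log hpos.ne').tendsto.comp (Real.GammaSeq_tendsto_Gamma x)
  refine h1.congr' ?_
  filter_upwards [eventually_ge_atTop 1] with n hn
  have hn0 : (0:ℝ) < n := by exact_mod_cast hn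
  have hfac : (0:ℝ) < (Nat.factorial n : ℝ) := by exact_mod_cast Nat.factorial_pos n
  have hprod0 : ∀ j ∈ range (n + 1), x + (j : ℝ) ≠ 0 := fun j _ => by positivity
  have hprodpos : (0:ℝ) < ∏ j ∈ range (n + 1), (x + (j : ℝ)) :=
    Finset.prod_pos fun j _ => by positivity
  rw [Real.GammaSeq, Real.log_div (by positivity) hprodpos.ne', Real.log_mul
    (by positivity) hfac.ne', Real.log_rpow hn0, Real.log_prod hprod0, Lf]

lemma hasDerivAt_logGamma {x : ℝ} (hx : 0 < x) :
    HasDerivAt (fun y => Real.log (Real.Gamma y)) (g1 x) x := by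
  refine hasDerivAt_of_tendstoUniformlyOn (f := Lf) (isOpen_Ioo (a := x/2) (b := x+1))
    (tendstoUniformlyOn_L1 (by linarith)) ?_ ?_ ?_
  · filter_upwards with n y hy
    exact hasDerivAt_Lf n (by have := hy.1; linarith : (0:ℝ) < y)
  · intro y hy
    exact tendsto_Lf (by have := hy.1; linarith : (0:ℝ) < y)
  · constructor <;> linarith

lemma Psi0_eq {x : ℝ} (hx : 0 < x) : Psi0 x = g1 x := (hasDerivAt_logGamma hx).deriv

lemma psi0_eventuallyEq {x : ℝ} (hx : 0 < x) : Psi0 =ᶠ[𝓝 x] g1 := by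
  filter_upwards [eventually_gt_nhds hx] with y hy
  exact Psi0_eq hy

lemma hasDerivAt_g1 {x : ℝ} (hx : 0 < x) : HasDerivAt g1 (D1 x) x := by
  refine hasDerivAt_of_tendstoUniformlyOn (f := L1) (isOpen_Ioo (a := x/2) (b := x+1))
    (tendstoUniformlyOn_L2 (by linarith)) ?_ ?_ ?_
  · filter_upwards with n y hy
    exact hasDerivAt_L1 n (by have := hy.1; linarith : (0:ℝ) < y)
  · intro y hy
    exact (tendstoUniformlyOn_L1 (by linarith : (0:ℝ) < x/2)).tendsto_at hy
  · constructor <;> linarith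

lemma hasDerivAt_Psi0_D1 {x : ℝ} (hx : 0 < x) : HasDerivAt Psi0 (D1 x) x :=
  (hasDerivAt_g1 hx).congr_of_eventuallyEq (psi0_eventuallyEq hx)

lemma Psi1_eq {x : ℝ} (hx : 0 < x) : Psi1 x = D1 x := (hasDerivAt_Psi0_D1 hx).deriv

lemma hasDerivAt_Psi0 {x : ℝ} (hx : 0 < x) : HasDerivAt Psi0 (Psi1 x) x := by
  rw [Psi1_eq hx]; exact hasDerivAt_Psi0_D1 hx

lemma psi1_eventuallyEq {x : ℝ} (hx : 0 < x) : Psi1 =ᶠ[𝓝 x] D1 := by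
  filter_upwards [eventually_gt_nhds hx] with y hy
  exact Psi1_eq hy

lemma hasDerivAt_D1 {x : ℝ} (hx : 0 < x) : HasDerivAt D1 (D2 x) x := by
  refine hasDerivAt_of_tendstoUniformlyOn (f := L2) (isOpen_Ioo (a := x/2) (b := x+1))
    (tendstoUniformlyOn_L3 (by linarith)) ?_ ?_ ?_
  · filter_upwards with n y hy
    exact hasDerivAt_L2 n (by have := hy.1; linarith : (0:ℝ) < y)
  · intro y hy
    exact (tendstoUniformlyOn_L2 (by linarith : (0:ℝ) < x/2)).tendsto_at hy
  · constructor <;> linarith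

lemma hasDerivAt_Psi1 {x : ℝ} (hx : 0 < x) : HasDerivAt Psi1 (D2 x) x :=
  (hasDerivAt_D1 hx).congr_of_eventuallyEq (psi1_eventuallyEq hx)

lemma continuousAt_D2 {x : ℝ} (hx : 0 < x) : ContinuousAt D2 x := by
  have hcont : ContinuousOn D2 (Set.Ioo (x/2) (x+1)) := by
    refine (tendstoUniformlyOn_L3 (by linarith : (0:ℝ) < x/2)).continuousOn ?_
    refine Filter.Frequently.of_forall fun n => ?_
    refine continuousOn_finset_sum _ fun k _ => ?_
    refine ContinuousOn.div continuousOn_const (by fun_prop) fun y hy => ?_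
    have : (0:ℝ) < y := by have := hy.1; linarith
    positivity
  exact hcont.continuousAt (Ioo_mem_nhds (by linarith) (by linarith))

lemma continuousAt_Psi1 {x : ℝ} (hx : 0 < x) : ContinuousAt Psi1 x :=
  (hasDerivAt_Psi1 hx).continuousAt


/-! ### Part II: elementary consequences -/

lemma Psi1_pos {x : ℝ} (hx : 0 < x) : 0 < Psi1 x := by
  rw [Psi1_eq hx]; exact D1_pos hx

lemma Psi1_ge_inv_sq {x : ℝ} (hx : 0 < x) : 1 / x ^ 2 ≤ Psi1 x := by
  rw [Psi1_eq hx]; exact D1_ge hx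

lemma Psi1_anti {x y : ℝ} (hx : 0 < x) (hxy : x ≤ y) : Psi1 y ≤ Psi1 x := by
  rw [Psi1_eq hx, Psi1_eq (hx.trans_le hxy)]; exact D1_anti hx hxy

lemma hasDerivAt_Psi0_rev {μ u : ℝ} (h : 0 < μ - u) :
    HasDerivAt (fun v => Psi0 (μ - v)) (-Psi1 (μ - u)) u := by
  have h1 := (hasDerivAt_Psi0 h).comp u ((hasDerivAt_id u).const_sub μ)
  simpa [Function.comp_def] using h1

lemma hasDerivAt_Psi1_rev {μ u : ℝ} (h : 0 < μ - u) :
    HasDerivAt (fun v => Psi1 (μ - v)) (-D2 (μ - u)) u := by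
  have h1 := (hasDerivAt_Psi1 h).comp u ((hasDerivAt_id u).const_sub μ)
  simpa [Function.comp_def] using h1


section Geometry

variable {μ : ℝ}

/-- Derivative of the linear functional `F`. -/
lemma hasDerivAt_F {x y u : ℝ} (hu : u ∈ Set.Ioo 0 μ) :
    HasDerivAt (fun v => -(x * Psi0 (μ - v) + y * Psi0 v))
      (x * Psi1 (μ - u) - y * Psi1 u) u := by
  have h1 := ((hasDerivAt_Psi0_rev (by linarith [hu.2] : 0 < μ - u)).const_mul x).fun_add
    ((hasDerivAt_Psi0 hu.1).const_mul y)
  have h2 := h1.fun_neg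
  exact h2.congr_deriv (by ring)

lemma hasDerivAt_F' {x y u : ℝ} (hu : u ∈ Set.Ioo 0 μ) :
    HasDerivAt (fun v => x * Psi1 (μ - v) - y * Psi1 v)
      (-(x * D2 (μ - u)) - y * D2 u) u := by
  have h1 := ((hasDerivAt_Psi1_rev (by linarith [hu.2] : 0 < μ - u)).const_mul x).fun_sub
    ((hasDerivAt_Psi1 hu.1).const_mul y)
  exact h1.congr_deriv (by ring)

lemma strictMonoOn_F' {x y : ℝ} (hx : 0 < x) (hy : 0 < y) :
    StrictMonoOn (fun v => x * Psi1 (μ - v) - y * Psi1 v) (Set.Ioo 0 μ) := by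
  refine strictMonoOn_of_deriv_pos (convex_Ioo 0 μ) (fun u hu => (hasDerivAt_F' hu).continuousAt.continuousWithinAt) ?_
  intro u hu
  rw [interior_Ioo] at hu
  rw [(hasDerivAt_F' hu).deriv]
  have h1 : D2 (μ - u) < 0 := D2_neg (by linarith [hu.2])
  have h2 : D2 u < 0 := D2_neg hu.1
  nlinarith

/-- First-order convexity lower bound. -/
lemma convex_lower (F F' : ℝ → ℝ)
    (hF : ∀ u ∈ Set.Ioo (0:ℝ) μ, HasDerivAt F (F' u) u)
    (hmono : StrictMonoOn F' (Set.Ioo 0 μ))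
    {t1 t2 : ℝ} (ht1 : t1 ∈ Set.Ioo (0:ℝ) μ) (ht2 : t2 ∈ Set.Ioo (0:ℝ) μ) :
    F t1 + F' t1 * (t2 - t1) ≤ F t2 := by
  rcases lt_trichotomy t1 t2 with h | h | h
  · have hsub : Set.Icc t1 t2 ⊆ Set.Ioo 0 μ := fun z hz =>
      ⟨lt_of_lt_of_le ht1.1 hz.1, lt_of_le_of_lt hz.2 ht2.2⟩
    obtain ⟨c, hc, hceq⟩ := exists_hasDerivAt_eq_slope F F' h
      (fun z hz => (hF z (hsub hz)).continuousAt.continuousWithinAt)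
      (fun z hz => hF z (hsub ⟨le_of_lt hz.1, le_of_lt hz.2⟩))
    have hcmem : c ∈ Set.Ioo (0:ℝ) μ := hsub ⟨le_of_lt hc.1, le_of_lt hc.2⟩
    have hle : F' t1 ≤ F' c := le_of_lt (hmono ht1 hcmem hc.1)
    have h21 : 0 < t2 - t1 := by linarith
    have := hceq ▸ (div_le_div_iff_of_pos_right h21).mpr
    -- F' c = (F t2 - F t1)/(t2 - t1)
    have hFt : F t2 - F t1 = F' c * (t2 - t1) := by
      field_simp at hceq
      linarith [hceq]
    nlinarith
  · subst h; simp
  · have hsub : Set.Icc t2 t1 ⊆ Set.Ioo 0 μ := fun z hz =>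
      ⟨lt_of_lt_of_le ht2.1 hz.1, lt_of_le_of_lt hz.2 ht1.2⟩
    obtain ⟨c, hc, hceq⟩ := exists_hasDerivAt_eq_slope F F' h
      (fun z hz => (hF z (hsub hz)).continuousAt.continuousWithinAt)
      (fun z hz => hF z (hsub ⟨le_of_lt hz.1, le_of_lt hz.2⟩))
    have hcmem : c ∈ Set.Ioo (0:ℝ) μ := hsub ⟨le_of_lt hc.1, le_of_lt hc.2⟩
    have hle : F' c ≤ F' t1 := le_of_lt (hmono hcmem ht1 hc.2)
    have h21 : 0 < t1 - t2 := by linarith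
    have hFt : F t1 - F t2 = F' c * (t1 - t2) := by
      field_simp at hceq
      linarith [hceq]
    nlinarith

end Geometry

/-- Representation of `Lam` at a point with positive coordinates on the ray of `α`. -/
lemma lam_repr {μ : ℝ} (Lam : ℝ × ℝ → ℝ)
    (hhom : ∀ (c : ℝ) (p : ℝ × ℝ), 0 < c → Lam (c • p) = c * Lam p)
    (hval : ∀ α ∈ Set.Ioo 0 μ, Lam (xiDir μ α) =
      -(Psi1 α * Psi0 (μ - α) + Psi1 (μ - α) * Psi0 α) / (Psi1 α + Psi1 (μ - α)))
    {x y α : ℝ} (hx : 0 < x) (hy : 0 < y) (hα : α ∈ Set.Ioo 0 μ)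
    (hrel : x * Psi1 (μ - α) = y * Psi1 α) :
    Lam (x, y) = -(x * Psi0 (μ - α) + y * Psi0 α) := by
  have h1 : 0 < Psi1 α := Psi1_pos hα.1
  have h2 : 0 < Psi1 (μ - α) := Psi1_pos (by linarith [hα.2])
  have hS : 0 < Psi1 α + Psi1 (μ - α) := by linarith
  have hc : (0:ℝ) < x * (Psi1 α + Psi1 (μ - α)) / Psi1 α := by positivity
  have hp : (x * (Psi1 α + Psi1 (μ - α)) / Psi1 α) • xiDir μ α = (x, y) := by
    rw [xiDir, Prod.smul_mk, smul_eq_mul, smul_eq_mul]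
    have hy' : y = x * Psi1 (μ - α) / Psi1 α := by
      field_simp
      linarith [hrel]
    rw [Prod.mk.injEq]
    constructor
    · field_simp
    · rw [hy']
      field_simp
  have h3 := hhom (x * (Psi1 α + Psi1 (μ - α)) / Psi1 α) (xiDir μ α) hc
  rw [hp, hval α hα] at h3
  rw [h3]
  have hy' : y = x * Psi1 (μ - α) / Psi1 α := by
    field_simp
    linarith [hrel]
  rw [hy']
  field_simp

/-- Existence of a critical direction through any point of the open quadrant. -/
lemma exists_crit {μ : ℝ} (hμ : 0 < μ) {x y : ℝ} (hx : 0 < x) (hy : 0 < y) :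
    ∃ α ∈ Set.Ioo 0 μ, x * Psi1 (μ - α) = y * Psi1 α := by
  have hD : 0 < D1 (μ/2) := D1_pos (by linarith)
  -- left endpoint
  set r0 : ℝ := Real.sqrt (y / (x * D1 (μ/2) + 1)) with hr0
  have hr0pos : 0 < r0 := Real.sqrt_pos.mpr (by positivity)
  set t0 : ℝ := min (μ/4) (r0/2) with ht0
  have ht0pos : 0 < t0 := lt_min (by linarith) (by linarith)
  have ht0le : t0 ≤ μ/4 := min_le_left _ _
  have hφ0 : x * Psi1 (μ - t0) - y * Psi1 t0 < 0 := by
    have hμt0 : μ/2 ≤ μ - t0 := by linarith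
    have hb1 : Psi1 (μ - t0) ≤ D1 (μ/2) := by
      rw [Psi1_eq (by linarith : (0:ℝ) < μ - t0)]
      exact D1_anti (by linarith) hμt0
    have hb2 : 1 / t0 ^ 2 ≤ Psi1 t0 := Psi1_ge_inv_sq ht0pos
    have ht0r : t0 ≤ r0/2 := min_le_right _ _
    have hsq : t0 ^ 2 ≤ y / (x * D1 (μ/2) + 1) / 4 := by
      have h4 : t0 ^ 2 ≤ (r0/2)^2 := by nlinarith
      have : r0 ^ 2 = y / (x * D1 (μ/2) + 1) := Real.sq_sqrt (by positivity)
      nlinarith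
    have hquo : 0 < y / (x * D1 (μ/2) + 1) / 4 := by positivity
    have hbig : 4 * (x * D1 (μ/2) + 1) ≤ y / t0 ^ 2 := by
      rw [le_div_iff₀ (by positivity)]
      calc 4 * (x * D1 (μ/2) + 1) * t0 ^ 2 ≤ 4 * (x * D1 (μ/2) + 1) * (y / (x * D1 (μ/2) + 1) / 4) := by
            have h5 : 0 < 4 * (x * D1 (μ/2) + 1) := by positivity
            exact mul_le_mul_of_nonneg_left hsq (le_of_lt h5)
        _ = y := by field_simp
    have hy2 : y / t0 ^ 2 ≤ y * Psi1 t0 := by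
      rw [div_eq_mul_one_div]
      exact mul_le_mul_of_nonneg_left hb2 (le_of_lt hy)
    nlinarith
  -- right endpoint
  set r1 : ℝ := Real.sqrt (x / (y * D1 (μ/2) + 1)) with hr1
  have hr1pos : 0 < r1 := Real.sqrt_pos.mpr (by positivity)
  set u1 : ℝ := min (μ/4) (r1/2) with hu1
  have hu1pos : 0 < u1 := lt_min (by linarith) (by linarith)
  have hu1le : u1 ≤ μ/4 := min_le_left _ _
  set t1 : ℝ := μ - u1 with ht1
  have hφ1 : 0 < x * Psi1 (μ - t1) - y * Psi1 t1 := by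
    have hmt1 : μ - t1 = u1 := by ring
    have hb1 : Psi1 t1 ≤ D1 (μ/2) := by
      rw [Psi1_eq (by simp only [ht1]; linarith : (0:ℝ) < t1)]
      exact D1_anti (by linarith) (by simp only [ht1]; linarith)
    have hb2 : 1 / u1 ^ 2 ≤ Psi1 u1 := Psi1_ge_inv_sq hu1pos
    have hu1r : u1 ≤ r1/2 := min_le_right _ _
    have hsq : u1 ^ 2 ≤ x / (y * D1 (μ/2) + 1) / 4 := by
      have h4 : u1 ^ 2 ≤ (r1/2)^2 := by nlinarith
      have : r1 ^ 2 = x / (y * D1 (μ/2) + 1) := Real.sq_sqrt (by positivity)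
      nlinarith
    have hbig : 4 * (y * D1 (μ/2) + 1) ≤ x / u1 ^ 2 := by
      rw [le_div_iff₀ (by positivity)]
      calc 4 * (y * D1 (μ/2) + 1) * u1 ^ 2 ≤ 4 * (y * D1 (μ/2) + 1) * (x / (y * D1 (μ/2) + 1) / 4) := by
            have h5 : 0 < 4 * (y * D1 (μ/2) + 1) := by positivity
            exact mul_le_mul_of_nonneg_left hsq (le_of_lt h5)
        _ = x := by field_simp
    have hx2 : x / u1 ^ 2 ≤ x * Psi1 u1 := by
      rw [div_eq_mul_one_div]
      exact mul_le_mul_of_nonneg_left hb2 (le_of_lt hx)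
    rw [hmt1]
    nlinarith
  have ht01 : t0 < t1 := by
    have : u1 ≤ μ/4 := hu1le
    simp only [ht1]
    linarith
  have hsub : Set.Icc t0 t1 ⊆ Set.Ioo 0 μ := by
    intro z hz
    constructor
    · linarith [hz.1]
    · have : z ≤ t1 := hz.2
      simp only [ht1] at this
      linarith
  have hcont : ContinuousOn (fun t => x * Psi1 (μ - t) - y * Psi1 t) (Set.Icc t0 t1) := by
    intro z hz
    have hzmem := hsub hz
    exact (hasDerivAt_F' hzmem).continuousAt.continuousWithinAt
  have hIVT := intermediate_value_Icc (le_of_lt ht01) hcont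
  have h0mem : (0:ℝ) ∈ Set.Icc (x * Psi1 (μ - t0) - y * Psi1 t0) (x * Psi1 (μ - t1) - y * Psi1 t1) :=
    ⟨le_of_lt hφ0, le_of_lt hφ1⟩
  obtain ⟨α, hαmem, hαeq⟩ := hIVT h0mem
  refine ⟨α, hsub hαmem, ?_⟩
  have h := hαeq
  simp only at h
  linarith

end Stmt11Aux

lemma aux_cube_ge {t : ℝ} (h : 1 ≤ t) : t ≤ t ^ 3 := by
  have h0 : 0 ≤ t * (t - 1) * (t + 1) :=
    mul_nonneg (mul_nonneg (by linarith) (by linarith)) (by linarith)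
  have e : t * (t - 1) * (t + 1) = t ^ 3 - t := by ring
  linarith

lemma aux_sq_ge {t : ℝ} (h : 2 ≤ t) : 4 ≤ t ^ 2 := by nlinarith

lemma aux_prod_lb {B M v w : ℝ} (h1 : -B ≤ v) (h2 : v ≤ B) (h3 : -M < w) (h4 : w < M)
    (hB : 0 ≤ B) : -(B * M) ≤ v * w := by nlinarith


set_option maxHeartbeats 2000000 in
open Stmt11Aux in
/-- Curvature-induced loss of free energy at transversal displacement `s N^{2/3}`
from the characteristic direction, for the inverse-gamma shape function `Λ`
(positively homogeneous with the prescribed values along characteristic directions). -/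
theorem stmt11 (μ ε : ℝ) (hμ : 0 < μ) (hε : ε ∈ Set.Ioo 0 (μ / 2)) :
    ∃ C1 > (0 : ℝ), ∃ N0 : ℕ, ∃ c0 > (0 : ℝ), ∀ ρ ∈ Set.Icc ε (μ - ε),
      ∀ Lam : ℝ × ℝ → ℝ,
        (∀ (c : ℝ) (p : ℝ × ℝ), 0 < c → Lam (c • p) = c * Lam p) →
        (∀ α ∈ Set.Ioo 0 μ,
          Lam (xiDir μ α) =
            -(Psi1 α * Psi0 (μ - α) + Psi1 (μ - α) * Psi0 α) / (Psi1 α + Psi1 (μ - α))) →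
        ∀ N : ℕ, N0 ≤ N → ∀ s : ℝ, 1 ≤ s → s ≤ c0 * (N : ℝ) ^ ((1 : ℝ) / 3) →
          Lam (((⌊(N : ℝ) * (xiDir μ ρ).1⌋ - ⌊s * (N : ℝ) ^ ((2 : ℝ) / 3)⌋ : ℤ) : ℝ),
               ((⌊(N : ℝ) * (xiDir μ ρ).2⌋ + ⌊s * (N : ℝ) ^ ((2 : ℝ) / 3)⌋ : ℤ) : ℝ))
            - (⌊s * (N : ℝ) ^ ((2 : ℝ) / 3)⌋ : ℝ) * Psi0 (μ - ρ)
            + (⌊s * (N : ℝ) ^ ((2 : ℝ) / 3)⌋ : ℝ) * Psi0 ρ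
            - Lam (((⌊(N : ℝ) * (xiDir μ ρ).1⌋ : ℤ) : ℝ),
                   ((⌊(N : ℝ) * (xiDir μ ρ).2⌋ : ℤ) : ℝ))
          ≤ -C1 * s ^ 2 * (N : ℝ) ^ ((1 : ℝ) / 3) := by
  obtain ⟨hε0, hεμ⟩ := hε
  set κ := D1 μ with hκdef
  set Bc := D1 ε with hBdef
  have hκpos : 0 < κ := D1_pos hμ
  have hBpos : 0 < Bc := D1_pos hε0
  have hκB : κ ≤ Bc := D1_anti hε0 (by linarith)
  set d : ℝ := κ / (2 * Bc) with hddef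
  have hdpos : 0 < d := by positivity
  have hd1 : d ≤ 1/2 := by
    rw [hddef, div_le_iff₀ (by positivity)]
    nlinarith
  -- maximum of -D2 on the window
  have hWne : (Set.Icc (ε/2) (μ - ε/2)).Nonempty := ⟨ε/2, le_refl _, by linarith⟩
  have hWcont : ContinuousOn (fun u => -D2 u) (Set.Icc (ε/2) (μ - ε/2)) := fun z hz =>
    ((continuousAt_D2 (by linarith [hz.1] : (0:ℝ) < z)).neg).continuousWithinAt
  obtain ⟨tM, htM, htMmax⟩ := isCompact_Icc.exists_isMaxOn hWne hWcont
  set M2 := -D2 tM with hM2def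
  have hM2pos : 0 < M2 := by
    rw [hM2def, neg_pos]
    exact D2_neg (by linarith [htM.1])
  have hM2bound : ∀ u ∈ Set.Icc (ε/2) (μ - ε/2), -D2 u ≤ M2 := fun u hu =>
    isMaxOn_iff.mp htMmax u hu
  -- constants
  set C1 := κ^2 / (32 * M2) with hC1def
  have hC1pos : 0 < C1 := by positivity
  set c0 := min (d/2) (ε * M2 / κ) with hc0def
  have hc0pos : 0 < c0 := lt_min (by positivity) (by positivity)
  have hc0d : c0 ≤ d/2 := min_le_left _ _
  have hc0ε : c0 ≤ ε * M2 / κ := min_le_right _ _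
  set T := max (max 2 (2/d + 1)) (max (4*Bc/κ) (Bc*μ/C1 + 1)) with hTdef
  have hT2 : (2:ℝ) ≤ T := le_trans (le_max_left _ _) (le_max_left _ _)
  have hTd : 2/d + 1 ≤ T := le_trans (le_max_right _ _) (le_max_left _ _)
  have hTB : 4*Bc/κ ≤ T := le_trans (le_max_left _ _) (le_max_right _ _)
  have hTC : Bc*μ/C1 + 1 ≤ T := le_trans (le_max_right _ _) (le_max_right _ _)
  have hTpos : 0 < T := by linarith
  refine ⟨C1, hC1pos, ⌈T^3⌉₊, c0, hc0pos, ?_⟩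
  intro ρ hρ Lam hhom hval N hN s hs1 hs2
  -- basic facts about ρ
  have hρ1 : ε ≤ ρ := hρ.1
  have hρ2 : ρ ≤ μ - ε := hρ.2
  have hρ0 : 0 < ρ := lt_of_lt_of_le hε0 hρ1
  have hρμ : ρ < μ := by linarith
  have hμρ0 : 0 < μ - ρ := by linarith
  have hκle : ∀ u : ℝ, 0 < u → u ≤ μ → κ ≤ Psi1 u := fun u h1 h2 => by
    rw [Psi1_eq h1, hκdef]; exact D1_anti h1 h2
  have hBge : ∀ u : ℝ, ε ≤ u → u ≤ μ → Psi1 u ≤ Bc := fun u h1 h2 => by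
    rw [Psi1_eq (by linarith), hBdef]; exact D1_anti hε0 h1
  simp only [xiDir]
  set A := Psi1 ρ with hA
  set Bρ := Psi1 (μ - ρ) with hBρ
  have hApos : 0 < A := Psi1_pos hρ0
  have hBρpos : 0 < Bρ := Psi1_pos hμρ0
  set S := A + Bρ with hSdef
  have hSpos : 0 < S := by positivity
  have hAub : A ≤ Bc := hBge ρ hρ1 (le_of_lt hρμ)
  have hBρub : Bρ ≤ Bc := hBge (μ - ρ) (by linarith) (by linarith)
  have hAlb : κ ≤ A := hκle ρ hρ0 (le_of_lt hρμ)
  have hBρlb : κ ≤ Bρ := hκle (μ - ρ) hμρ0 (by linarith)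
  have hSub : S ≤ 2 * Bc := by rw [hSdef]; linarith
  have hξ1lb : d ≤ A / S := by
    rw [hddef]
    exact div_le_div₀ hApos.le hAlb hSpos hSub
  have hξ2lb : d ≤ Bρ / S := by
    rw [hddef]
    exact div_le_div₀ hBρpos.le hBρlb hSpos hSub
  have hξ1ub : A / S ≤ 1 := by rw [div_le_one hSpos]; linarith
  have hξ2ub : Bρ / S ≤ 1 := by rw [div_le_one hSpos]; linarith
  -- facts about N
  have hNT : T^3 ≤ (N:ℝ) := by
    refine le_trans (Nat.le_ceil _) ?_
    exact_mod_cast hN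
  have hNpos : (0:ℝ) < N := lt_of_lt_of_le (by positivity) hNT
  set t := (N:ℝ) ^ ((1:ℝ)/3) with htdef
  set P := (N:ℝ) ^ ((2:ℝ)/3) with hPdef
  have htpos : 0 < t := Real.rpow_pos_of_pos hNpos _
  have hPt : P = t^2 := by
    rw [htdef, hPdef, ← Real.rpow_natCast ((N:ℝ)^((1:ℝ)/3)) 2, ← Real.rpow_mul hNpos.le]
    norm_num
  have htcube : t^3 = (N:ℝ) := by
    rw [htdef, ← Real.rpow_natCast ((N:ℝ)^((1:ℝ)/3)) 3, ← Real.rpow_mul hNpos.le]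
    norm_num
  have hTt : T ≤ t := by
    have h2 : (T^3) ^ ((1:ℝ)/3) ≤ (N:ℝ) ^ ((1:ℝ)/3) :=
      Real.rpow_le_rpow (by positivity) hNT (by norm_num)
    have h3 : (T^3 : ℝ) ^ ((1:ℝ)/3) = T := by
      rw [← Real.rpow_natCast T 3, ← Real.rpow_mul hTpos.le]
      norm_num
    rwa [h3] at h2
  have ht2 : 2 ≤ t := le_trans hT2 hTt
  have htN : t ≤ (N:ℝ) := by rw [← htcube]; exact aux_cube_ge (by linarith)
  have htP : t * P = (N:ℝ) := by rw [hPt, ← htcube]; ring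
  have hP4 : 4 ≤ P := by rw [hPt]; exact aux_sq_ge ht2
  -- floor quantities
  set m : ℝ := ((⌊s * P⌋ : ℤ) : ℝ) with hmdef
  have hm1 : m ≤ s * P := Int.floor_le _
  have hm2 : s * P - 1 < m := Int.sub_one_lt_floor _
  have hsP4 : 4 ≤ s * P := le_trans hP4 (le_mul_of_one_le_left (by linarith) hs1)
  have hm3 : 3 ≤ m := by linarith
  have hmhalf : s * P / 2 ≤ m := by linarith
  have hmub : m ≤ c0 * (N:ℝ) := by
    calc m ≤ s * P := hm1
      _ ≤ (c0 * t) * P := mul_le_mul_of_nonneg_right hs2 (by linarith)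
      _ = c0 * (N:ℝ) := by rw [mul_assoc, htP]
  have hmt : t ≤ m := by
    have h1 : t * 2 ≤ t * t := mul_le_mul_of_nonneg_left ht2 htpos.le
    have h2 : P ≤ s * P := le_mul_of_one_le_left (by linarith) hs1
    have h3 : P = t * t := by rw [hPt]; ring
    linarith
  have hmB : 2 * Bc / κ ≤ m := by
    have : 4 * Bc / κ ≤ t := le_trans hTB hTt
    have h4 : 2 * Bc / κ ≤ 4 * Bc / κ := by
      refine (div_le_div_iff_of_pos_right hκpos).mpr (by linarith)
    linarith
  set x : ℝ := ((⌊(N:ℝ) * (A / S)⌋ : ℤ) : ℝ) with hxdef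
  set y : ℝ := ((⌊(N:ℝ) * (Bρ / S)⌋ : ℤ) : ℝ) with hydef
  have hx1 : x ≤ (N:ℝ) * (A / S) := Int.floor_le _
  have hx2 : (N:ℝ) * (A / S) - 1 < x := Int.sub_one_lt_floor _
  have hy1 : y ≤ (N:ℝ) * (Bρ / S) := Int.floor_le _
  have hy2 : (N:ℝ) * (Bρ / S) - 1 < y := Int.sub_one_lt_floor _
  have hNd : 2 + d ≤ d * (N:ℝ) := by
    have h1 : 2/d + 1 ≤ (N:ℝ) := le_trans hTd (le_trans hTt htN)
    have := mul_le_mul_of_nonneg_left h1 hdpos.le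
    calc (2:ℝ) + d ≤ d * (2/d + 1) := by rw [mul_add, mul_div_cancel₀ _ hdpos.ne']; linarith
      _ ≤ d * (N:ℝ) := this
  have hxlb : d * (N:ℝ) - 1 < x := by
    have : d * (N:ℝ) ≤ (N:ℝ) * (A / S) := by
      rw [mul_comm (N:ℝ) (A / S)]
      exact mul_le_mul_of_nonneg_right hξ1lb hNpos.le
    linarith
  have hylb : d * (N:ℝ) - 1 < y := by
    have : d * (N:ℝ) ≤ (N:ℝ) * (Bρ / S) := by
      rw [mul_comm (N:ℝ) (Bρ / S)]
      exact mul_le_mul_of_nonneg_right hξ2lb hNpos.le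
    linarith
  have hxub : x ≤ (N:ℝ) := le_trans hx1 (by
    have := mul_le_mul_of_nonneg_left hξ1ub hNpos.le
    simpa using this)
  have hyub : y ≤ (N:ℝ) := le_trans hy1 (by
    have := mul_le_mul_of_nonneg_left hξ2ub hNpos.le
    simpa using this)
  have hxpos : 0 < x := by linarith
  have hypos : 0 < y := by linarith
  have hxmpos : 0 < x - m := by
    have h1 : m ≤ (d/2) * (N:ℝ) := le_trans hmub (mul_le_mul_of_nonneg_right hc0d hNpos.le)
    linarith
  have hympos : 0 < y + m := by linarith
  -- the shift δ
  set δ : ℝ := κ * m / (2 * M2 * (N:ℝ)) with hδdef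
  have hδpos : 0 < δ := by positivity
  have hδε : δ ≤ ε/2 := by
    rw [hδdef, div_le_iff₀ (by positivity)]
    have h1 : m ≤ (ε * M2 / κ) * (N:ℝ) := le_trans hmub (mul_le_mul_of_nonneg_right hc0ε hNpos.le)
    have h2 : κ * m ≤ κ * ((ε * M2 / κ) * (N:ℝ)) := mul_le_mul_of_nonneg_left h1 hκpos.le
    calc κ * m ≤ κ * ((ε * M2 / κ) * (N:ℝ)) := h2
      _ = ε/2 * (2 * M2 * (N:ℝ)) := by field_simp
  have hρδW : ρ + δ ≤ μ - ε/2 := by linarith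
  have hρδmem : ρ + δ ∈ Set.Ioo (0:ℝ) μ := ⟨by linarith, by linarith⟩
  have hρmem : ρ ∈ Set.Ioo (0:ℝ) μ := ⟨hρ0, hρμ⟩
  -- the functions
  set F : ℝ → ℝ := fun u => -(x * Psi0 (μ - u) + y * Psi0 u) with hFdef
  set F' : ℝ → ℝ := fun u => x * Psi1 (μ - u) - y * Psi1 u with hF'def
  set Fm : ℝ → ℝ := fun u => -((x - m) * Psi0 (μ - u) + (y + m) * Psi0 u) with hFmdef
  set G' : ℝ → ℝ := fun u => F' u + m * (-Psi1 (μ - u) - Psi1 u) with hG'def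
  set G : ℝ → ℝ := fun u => F u + m * (Psi0 (μ - u) - Psi0 u) with hGdef
  have hFd : ∀ u ∈ Set.Ioo (0:ℝ) μ, HasDerivAt F (F' u) u := fun u hu => hasDerivAt_F hu
  have hGd : ∀ u ∈ Set.Ioo (0:ℝ) μ, HasDerivAt G (G' u) u := by
    intro u hu
    have h1 := (hasDerivAt_Psi0_rev (by linarith [hu.2] : (0:ℝ) < μ - u)).sub
      (hasDerivAt_Psi0 hu.1)
    exact (hFd u hu).add (h1.const_mul m)
  -- critical points and Lam values
  obtain ⟨α, hαmem, hαrel⟩ := exists_crit hμ hxmpos hympos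
  obtain ⟨β, hβmem, hβrel⟩ := exists_crit hμ hxpos hypos
  have hLam1 : Lam (x - m, y + m) = Fm α := by
    rw [hFmdef]
    exact lam_repr Lam hhom hval hxmpos hympos hαmem hαrel
  have hLam2 : Lam (x, y) = F β := by
    rw [hFdef]
    exact lam_repr Lam hhom hval hxpos hypos hβmem hβrel
  -- upper bound for Fm α
  have hFmα : Fm α ≤ Fm (ρ + δ) := by
    have h1 := convex_lower (μ := μ) Fm (fun u => (x - m) * Psi1 (μ - u) - (y + m) * Psi1 u)
      (fun u hu => hasDerivAt_F hu) (strictMonoOn_F' hxmpos hympos) hαmem hρδmem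
    have h2 : (x - m) * Psi1 (μ - α) - (y + m) * Psi1 α = 0 := by rw [hαrel]; ring
    have h3 : Fm α + ((x - m) * Psi1 (μ - α) - (y + m) * Psi1 α) * (ρ + δ - α) ≤ Fm (ρ + δ) := h1
    rw [h2] at h3
    linarith
  -- lower bound for F β
  have hF'ρval : F' ρ = x * Bρ - y * A := rfl
  have hiden1 : ((N:ℝ) * (A/S)) * Bρ - ((N:ℝ) * (Bρ/S) - 1) * A = A := by field_simp; ring
  have hiden2 : ((N:ℝ) * (A/S) - 1) * Bρ - ((N:ℝ) * (Bρ/S)) * A = -Bρ := by field_simp; ring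
  have hF'le : F' ρ ≤ Bc := by
    rw [hF'ρval]
    have h1 : x * Bρ ≤ ((N:ℝ) * (A/S)) * Bρ := mul_le_mul_of_nonneg_right hx1 hBρpos.le
    have h2 : ((N:ℝ) * (Bρ/S) - 1) * A ≤ y * A := mul_le_mul_of_nonneg_right hy2.le hApos.le
    linarith
  have hF'ge : -Bc ≤ F' ρ := by
    rw [hF'ρval]
    have h1 : ((N:ℝ) * (A/S) - 1) * Bρ ≤ x * Bρ := mul_le_mul_of_nonneg_right hx2.le hBρpos.le
    have h2 : y * A ≤ ((N:ℝ) * (Bρ/S)) * A := mul_le_mul_of_nonneg_right hy1 hApos.le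
    linarith
  have hFβ : F ρ - Bc * μ ≤ F β := by
    have h1 := convex_lower (μ := μ) F F' hFd (strictMonoOn_F' hxpos hypos) hρmem hβmem
    have h2 : -(Bc * μ) ≤ F' ρ * (β - ρ) :=
      aux_prod_lb hF'ge hF'le (by linarith [hβmem.1]) (by linarith [hβmem.2]) hBpos.le
    linarith
  -- MVT for G on [ρ, ρ+δ]
  have hsubIcc : Set.Icc ρ (ρ + δ) ⊆ Set.Ioo (0:ℝ) μ := fun z hz =>
    ⟨lt_of_lt_of_le hρ0 hz.1, lt_of_le_of_lt hz.2 (by linarith)⟩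
  obtain ⟨c, hcmem, hceq⟩ := exists_hasDerivAt_eq_slope G G' (by linarith : ρ < ρ + δ)
    (fun z hz => (hGd z (hsubIcc hz)).continuousAt.continuousWithinAt)
    (fun z hz => hGd z (hsubIcc ⟨le_of_lt hz.1, le_of_lt hz.2⟩))
  have hGdiff : G (ρ + δ) - G ρ = G' c * δ := by
    have h0 : ρ + δ - ρ = δ := by ring
    rw [h0] at hceq
    rw [hceq]
    field_simp
  have hcmem' : c ∈ Set.Ioo (0:ℝ) μ := hsubIcc ⟨le_of_lt hcmem.1, le_of_lt hcmem.2⟩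
  -- bound G' c
  have hΨc : κ ≤ Psi1 c := hκle c hcmem'.1 (le_of_lt hcmem'.2)
  have hΨμc : κ ≤ Psi1 (μ - c) := hκle (μ - c) (by linarith [hcmem'.2]) (by linarith [hcmem'.1])
  -- MVT for F' on [ρ, c]
  obtain ⟨c2, hc2mem, hc2eq⟩ := exists_hasDerivAt_eq_slope F'
    (fun u => -(x * D2 (μ - u)) - y * D2 u) hcmem.1
    (fun z hz => (hasDerivAt_F' (hsubIcc ⟨hz.1, le_trans hz.2 (le_of_lt hcmem.2)⟩)).continuousAt.continuousWithinAt)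
    (fun z hz => hasDerivAt_F' (hsubIcc ⟨le_of_lt hz.1, le_trans (le_of_lt hz.2) (le_of_lt hcmem.2)⟩))
  have hc2W : c2 ∈ Set.Icc (ε/2) (μ - ε/2) := by
    have h1 := hc2mem.1
    have h2 := hc2mem.2
    constructor <;> [linarith; linarith [hcmem.2]]
  have hμc2W : μ - c2 ∈ Set.Icc (ε/2) (μ - ε/2) := by
    have h1 := hc2mem.1
    have h2 := hc2mem.2
    constructor <;> [linarith [hcmem.2]; linarith]
  have hD2a : -D2 (μ - c2) ≤ M2 := hM2bound _ hμc2W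
  have hD2b : -D2 c2 ≤ M2 := hM2bound _ hc2W
  have hD2apos : 0 < -D2 (μ - c2) := by
    rw [neg_pos]; exact D2_neg (by linarith [hμc2W.1, hε0])
  have hD2bpos : 0 < -D2 c2 := by
    rw [neg_pos]; exact D2_neg (by linarith [hc2W.1, hε0])
  have hF''ub : -(x * D2 (μ - c2)) - y * D2 c2 ≤ 2 * (N:ℝ) * M2 := by
    have h1 : -(x * D2 (μ - c2)) = x * (-D2 (μ - c2)) := by ring
    have h2 : -(y * D2 c2) = y * (-D2 c2) := by ring
    have h3 : x * (-D2 (μ - c2)) ≤ (N:ℝ) * M2 :=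
      mul_le_mul hxub hD2a hD2apos.le hNpos.le
    have h4 : y * (-D2 c2) ≤ (N:ℝ) * M2 :=
      mul_le_mul hyub hD2b hD2bpos.le hNpos.le
    linarith
  have hF''pos : 0 ≤ -(x * D2 (μ - c2)) - y * D2 c2 := by
    have h1 := mul_nonneg hxpos.le hD2apos.le
    have h2 := mul_nonneg hypos.le hD2bpos.le
    linarith [h1, h2]
  have hF'c : F' c ≤ F' ρ + κ * m := by
    have h0 : 0 < c - ρ := by linarith [hcmem.1]
    have h1 : F' c - F' ρ = (-(x * D2 (μ - c2)) - y * D2 c2) * (c - ρ) := by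
      rw [hc2eq]
      field_simp
    have h2 : (-(x * D2 (μ - c2)) - y * D2 c2) * (c - ρ) ≤ (2 * (N:ℝ) * M2) * δ := by
      refine mul_le_mul hF''ub (by linarith [hcmem.2]) h0.le (by positivity)
    have h3 : (2 * (N:ℝ) * M2) * δ = κ * m := by
      rw [hδdef]
      field_simp
    linarith
  have hG'c : G' c ≤ -(κ * m) / 2 := by
    have h1 : m * (-Psi1 (μ - c) - Psi1 c) ≤ m * (-(2 * κ)) :=
      mul_le_mul_of_nonneg_left (by linarith) (by linarith)
    have h2 : G' c = F' c + m * (-Psi1 (μ - c) - Psi1 c) := rfl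
    have h3 : G' c ≤ Bc - κ * m := by
      rw [h2]
      have h5 : m * (-(2 * κ)) = -(2 * (κ * m)) := by ring
      rw [h5] at h1
      linarith
    have h4 : Bc ≤ κ * m / 2 := by
      rw [div_le_iff₀ hκpos] at hmB
      linarith [hmB]
    linarith
  -- putting everything together
  have hGbound : G (ρ + δ) - G ρ ≤ -(κ^2 * m^2) / (4 * M2 * (N:ℝ)) := by
    rw [hGdiff]
    have h1 : G' c * δ ≤ (-(κ * m) / 2) * δ := mul_le_mul_of_nonneg_right hG'c hδpos.le
    have h2 : (-(κ * m) / 2) * δ = -(κ^2 * m^2) / (4 * M2 * (N:ℝ)) := by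
      rw [hδdef]
      field_simp
      ring
    linarith
  have hP2 : P^2 = (N:ℝ) * t := by
    have h1 : P^2 = t^3 * t := by rw [hPt]; ring
    rw [h1, htcube]
  have hmain : -(κ^2 * m^2) / (4 * M2 * (N:ℝ)) ≤ -(2 * C1) * s^2 * t := by
    rw [hC1def, div_le_iff₀ (by positivity)]
    have hm2lb : s^2 * ((N:ℝ) * t) / 4 ≤ m^2 := by
      have h1 : (s * P / 2)^2 ≤ m^2 := pow_le_pow_left₀ (by positivity) hmhalf 2
      have h2 : (s * P / 2)^2 = s^2 * P^2 / 4 := by ring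
      rw [h2, hP2] at h1
      linarith
    have hfin : κ^2 * (s^2 * ((N:ℝ) * t) / 4) ≤ κ^2 * m^2 :=
      mul_le_mul_of_nonneg_left hm2lb (by positivity)
    calc -(κ^2 * m^2) ≤ -(κ^2 * (s^2 * ((N:ℝ) * t) / 4)) := by linarith
      _ = -(2 * (κ^2/(32*M2))) * s^2 * t * (4 * M2 * (N:ℝ)) := by field_simp; ring
  have hs1sq : 1 ≤ s^2 := by
    calc (1:ℝ) = 1^2 := by norm_num
      _ ≤ s^2 := pow_le_pow_left₀ (by norm_num) hs1 2
  have htC : Bc * μ ≤ C1 * s^2 * t := by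
    have h1 : Bc*μ/C1 + 1 ≤ t := le_trans hTC hTt
    have h2 : Bc * μ ≤ C1 * t := by
      have h3 : C1 * (Bc*μ/C1) = Bc * μ := by field_simp
      have h4 : C1 * (Bc*μ/C1) ≤ C1 * (t - 1) := mul_le_mul_of_nonneg_left (by linarith) hC1pos.le
      have h5 : C1 * (t - 1) = C1 * t - C1 := by ring
      linarith
    have h6 : C1 * t = 1 * (C1 * t) := by ring
    have h7 : 1 * (C1 * t) ≤ s^2 * (C1 * t) :=
      mul_le_mul_of_nonneg_right hs1sq (by positivity)
    have h8 : s^2 * (C1 * t) = C1 * s^2 * t := by ring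
    linarith
  -- final chain
  have hFmG : Fm (ρ + δ) = G (ρ + δ) := by
    simp only [hFmdef, hGdef, hFdef]
    ring
  have hGρ : G ρ = F ρ + m * (Psi0 (μ - ρ) - Psi0 ρ) := rfl
  push_cast
  rw [hLam1, hLam2]
  calc Fm α - m * Psi0 (μ - ρ) + m * Psi0 ρ - F β
      ≤ Fm (ρ + δ) - m * Psi0 (μ - ρ) + m * Psi0 ρ - (F ρ - Bc * μ) := by linarith
    _ = (G (ρ + δ) - G ρ) + Bc * μ := by rw [hFmG, hGρ]; ring
    _ ≤ -(κ^2 * m^2) / (4 * M2 * (N:ℝ)) + Bc * μ := by linarith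
    _ ≤ -(2 * C1) * s^2 * t + C1 * s^2 * t := by linarith
    _ = -C1 * s^2 * t := by ring
end
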